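/- arXiv:1701.06651 — 3 statements merged into one kernel-verified Lean document; each statement's English description precedes it below -/
import Mathlib

section
/- Let ℓ ≥ 1 and let s, w_1,…,w_ℓ, z_1,…,z_ℓ be complex numbers with 0 < Re(s+2−w_j−z_j) < 1 for each j. Then Σ over all sign vectors (ε_1,…,ε_ℓ) ∈ {−1,+1}^ℓ of the iterated improper integral ∫_0^∞ ⋯ ∫_0^∞ ψ̂(ε_1 v_1 + ⋯ + ε_ℓ v_ℓ) ∏_{j=1}^ℓ v_j^{s+1−w_j−z_j} dv_ℓ ⋯ dv_1 (each integral over v_j understood as the limit lim_{R→∞} ∫_0^R, performed iteratively starting from the innermost variable v_ℓ) equals ∫_0^∞ ψ(t) ∏_{j=1}^ℓ χ(w_j+z_j−s−1) t^{w_j+z_j−s−2} dt. -/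
open scoped BigOperators Real

/-- `ψ̂(x) = ∫_ℝ ψ(t) e(-xt) dt` where `e(y) = exp(2πiy)`. -/
noncomputable def fourierHat (ψ : ℝ → ℂ) (x : ℝ) : ℂ :=
  ∫ t : ℝ, ψ t * Complex.exp (-(2 * π * Complex.I * x * t))

/-- The factor `χ(s) = 2^s π^{s-1} sin(πs/2) Γ(1-s)` from the functional equation
`ζ(s) = χ(s) ζ(1-s)`. -/
noncomputable def chiF (s : ℂ) : ℂ :=
  (2 : ℂ) ^ s * (π : ℂ) ^ (s - 1) * Complex.sin (π * s / 2) * Complex.Gamma (1 - s)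

/-- The improper integral `∫₀^∞ f = lim_{R→∞} ∫₀^R f` (junk value if the limit fails to
exist). -/
noncomputable def improperInt (f : ℝ → ℂ) : ℂ :=
  Filter.limUnder Filter.atTop (fun R => ∫ v in (0:ℝ)..R, f v)

/-- The iterated improper integral `∫₀^∞ ⋯ ∫₀^∞ f(v₁,…,v_n) dv_n ⋯ dv₁`, each integral taken
as `lim_{R→∞} ∫₀^R`, performed iteratively starting from the innermost variable `v_n`. -/
noncomputable def iterInt : (n : ℕ) → ((Fin n → ℝ) → ℂ) → ℂ
  | 0, f => f (fun i => i.elim0)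
  | n + 1, f => improperInt fun v => iterInt n fun vs => f (Fin.cons v vs)

open MeasureTheory Filter Set Complex
open scoped Topology

set_option linter.unusedVariables false
set_option linter.unnecessarySeqFocus false
set_option linter.unreachableTactic false
set_option linter.unusedTactic false
set_option linter.unnecessarySimpa false

noncomputable def Kker (a : ℂ) (b : ℝ) : ℂ :=
  Complex.Gamma (a + 1) * Complex.exp (-((a + 1) * Complex.log ((b : ℂ) * Complex.I)))

lemma norm_cpow_exp {v : ℝ} (hv : 0 < v) (a μ : ℂ) :
    ‖(v : ℂ) ^ a * Complex.exp (-(μ * v))‖ = v ^ a.re * Real.exp (-μ.re * v) := by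
  rw [norm_mul, Complex.norm_cpow_eq_rpow_re_of_pos hv, Complex.norm_exp]
  congr 2
  simp [Complex.neg_re, Complex.mul_re]

lemma measurable_cpow_exp (a μ : ℂ) :
    Measurable (fun v : ℝ => (v : ℂ) ^ a * Complex.exp (-(μ * v))) :=
  (Complex.measurable_ofReal.pow measurable_const).mul
    ((Complex.measurable_ofReal.const_mul μ).neg.cexp)

lemma integrable_rpow_exp {s c : ℝ} (hs : -1 < s) (hc : 0 < c) :
    IntegrableOn (fun x : ℝ => x ^ s * Real.exp (-c * x)) (Ioi 0) := by
  have := integrableOn_rpow_mul_exp_neg_mul_rpow (p := 1) (s := s) (b := c) hs zero_lt_one hc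
  simpa [Real.rpow_one] using this

lemma integrableOn_cpow_exp {a μ : ℂ} (ha : -1 < a.re) (hμ : 0 < μ.re) :
    IntegrableOn (fun v : ℝ => (v : ℂ) ^ a * Complex.exp (-(μ * v))) (Ioi 0) := by
  refine Integrable.mono' (integrable_rpow_exp ha hμ)
    ((measurable_cpow_exp a μ).aestronglyMeasurable) ?_
  filter_upwards [self_mem_ae_restrict measurableSet_Ioi] with v hv
  rw [norm_cpow_exp hv a μ]

lemma L1 {a : ℂ} (ha : -1 < a.re) {μ : ℂ} (hμ : 0 < μ.re) :
    ∫ v in Ioi (0:ℝ), (v : ℂ) ^ a * Complex.exp (-(μ * v)) =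
      Complex.Gamma (a + 1) * Complex.exp (-((a + 1) * Complex.log μ)) := by
  set U : Set ℂ := {z | 0 < z.re} with hUdef
  have hUopen : IsOpen U := isOpen_lt continuous_const Complex.continuous_re
  have hUconn : IsPreconnected U := (convex_halfSpace_re_gt 0).isPreconnected
  set F : ℂ → ℂ := fun z => ∫ v in Ioi (0:ℝ), (v : ℂ) ^ a * Complex.exp (-(z * v)) with hF
  set G : ℂ → ℂ := fun z => Complex.Gamma (a + 1) * Complex.exp (-((a + 1) * Complex.log z))
    with hG
  -- real case
  have hreal : ∀ r : ℝ, 0 < r → F r = G r := by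
    intro r hr
    have h0 := integral_cpow_mul_exp_neg_mul_Ioi (a := a + 1) (r := r)
      (by simp only [Complex.add_re, Complex.one_re]; linarith) hr
    simp only [add_sub_cancel_right] at h0
    have hrne : ((r : ℝ) : ℂ) ≠ 0 := Complex.ofReal_ne_zero.mpr hr.ne'
    rw [hF, hG]
    simp only
    rw [h0, Complex.cpow_def_of_ne_zero (by simpa using one_div_ne_zero hrne), mul_comm]
    congr 1
    have hlog : Complex.log (1 / (r : ℂ)) = -Complex.log (r : ℂ) := by
      rw [one_div, ← Complex.ofReal_inv, ← Complex.ofReal_log (by positivity),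
        Real.log_inv, ← Complex.ofReal_log hr.le, Complex.ofReal_neg]
    rw [hlog]
    ring_nf
  -- F differentiable on U
  have hFdiff : DifferentiableOn ℂ F U := by
    intro z₀ hz₀
    have hz₀re : (0:ℝ) < z₀.re := hz₀
    set ε : ℝ := z₀.re / 2 with hε
    have hεpos : 0 < ε := by positivity
    have key := hasDerivAt_integral_of_dominated_loc_of_deriv_le (μ := volume.restrict (Ioi 0))
      (F := fun (z : ℂ) (v : ℝ) => (v : ℂ) ^ a * Complex.exp (-(z * v)))
      (F' := fun (z : ℂ) (v : ℝ) => (v : ℂ) ^ a * (Complex.exp (-(z * v)) * (-(v : ℂ))))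
      (x₀ := z₀) (bound := fun v : ℝ => v ^ (a.re + 1) * Real.exp (-ε * v))
      (s := Metric.ball z₀ ε) (Metric.ball_mem_nhds z₀ hεpos)
      (Eventually.of_forall fun z => (measurable_cpow_exp a z).aestronglyMeasurable)
      (integrableOn_cpow_exp ha hz₀re)
      (((measurable_cpow_exp a z₀).mul Complex.measurable_ofReal.neg).aestronglyMeasurable.congr
        (Eventually.of_forall fun v => by simp only [Pi.neg_apply, Pi.mul_apply]; ring))
      ?_ ?_ ?_
    · exact key.2.differentiableAt.differentiableWithinAt
    · -- bound
      filter_upwards [self_mem_ae_restrict measurableSet_Ioi] with v hv z hz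
      have hv : (0:ℝ) < v := hv
      have hzre : ε ≤ z.re := by
        have h1 : |z.re - z₀.re| ≤ dist z z₀ := by
          rw [Complex.dist_eq]
          simpa using Complex.abs_re_le_norm (z - z₀)
        have h2 : dist z z₀ < ε := Metric.mem_ball.mp hz
        have := abs_le.mp h1
        linarith [this.1]
      rw [norm_mul, norm_mul]
      have h3 : ‖(v:ℂ)^a‖ = v ^ a.re := by
        rw [Complex.norm_cpow_eq_rpow_re_of_pos hv]
      have h4 : ‖Complex.exp (-(z*v))‖ = Real.exp (-z.re * v) := by
        rw [Complex.norm_exp]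
        congr 1
        simp [Complex.neg_re, Complex.mul_re]
      have h5 : ‖(-(v:ℂ))‖ = v := by
        simpa using abs_of_pos hv
      rw [h3, h4, h5, Real.rpow_add hv, Real.rpow_one]
      have : Real.exp (-z.re * v) ≤ Real.exp (-ε * v) := by
        apply Real.exp_le_exp.mpr
        nlinarith [hv.le]
      calc v ^ a.re * (Real.exp (-z.re * v) * v) ≤ v ^ a.re * (Real.exp (-ε * v) * v) := by
            apply mul_le_mul_of_nonneg_left (by nlinarith [hv.le]) (Real.rpow_nonneg hv.le _)
        _ = v ^ a.re * v * Real.exp (-ε * v) := by ring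
    · exact integrable_rpow_exp (by linarith : (-1:ℝ) < a.re + 1) hεpos
    · -- HasDerivAt
      filter_upwards [self_mem_ae_restrict measurableSet_Ioi] with v hv z hz
      have h1 : HasDerivAt (fun z : ℂ => -(z * v)) (-(v:ℂ)) z := by
        have h0 := ((hasDerivAt_id' z).mul_const (v:ℂ)).neg; rwa [one_mul] at h0
      exact (h1.cexp).const_mul _
  -- G differentiable on U
  have hGdiff : DifferentiableOn ℂ G U := by
    intro z hz
    have : DifferentiableAt ℂ G z := by
      apply DifferentiableAt.const_mul
      apply DifferentiableAt.cexp
      exact ((Complex.differentiableAt_log (Or.inl hz)).const_mul (a+1)).neg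
    exact this.differentiableWithinAt
  have key : EqOn F G U := by
    apply (hFdiff.analyticOnNhd hUopen).eqOn_of_preconnected_of_frequently_eq
      (hGdiff.analyticOnNhd hUopen) hUconn (show (1:ℂ) ∈ U by simp [hUdef])
    have htends : Tendsto (fun n : ℕ => ((1 + ((n:ℝ)+1)⁻¹ : ℝ) : ℂ)) atTop (𝓝[≠] 1) := by
      rw [tendsto_nhdsWithin_iff]
      constructor
      · have h1 : Tendsto (fun n : ℕ => (1 + ((n:ℝ)+1)⁻¹ : ℝ)) atTop (𝓝 1) := by
          have := tendsto_one_div_add_atTop_nhds_zero_nat (𝕜 := ℝ)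
          simpa [one_div] using tendsto_const_nhds.add this
        have h2 := (Complex.continuous_ofReal.tendsto 1).comp h1
        simpa [Function.comp_def] using h2
      · refine Eventually.of_forall fun n => ?_
        simp only [mem_compl_iff, mem_singleton_iff]
        intro h
        rw [show (1:ℂ) = ((1:ℝ):ℂ) by norm_num, Complex.ofReal_inj] at h
        have : (0:ℝ) < ((n:ℝ)+1)⁻¹ := by positivity
        linarith [h]
    apply htends.frequently
    apply Frequently.of_forall
    intro n
    exact hreal (1 + ((n:ℝ)+1)⁻¹) (by positivity)
  exact key hμ

lemma tail_bound {a : ℂ} (ha₁ : -1 < a.re) (ha₂ : a.re < 0) {b δ R : ℝ} (hb : b ≠ 0)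
    (hδ : 0 < δ) (hR : 1 ≤ R) :
    ‖∫ v in Ioi R, (v : ℂ) ^ a * Complex.exp (-(((δ : ℂ) + b * Complex.I) * v))‖ ≤
      R ^ a.re * (1 + ‖a‖ / (-a.re)) / |b| := by
  set μ : ℂ := (δ : ℂ) + b * Complex.I with hμdef
  have hμre : μ.re = δ := by simp [hμdef]
  have hμre0 : 0 < μ.re := by rw [hμre]; exact hδ
  have hμne : μ ≠ 0 := by
    intro h; rw [h] at hμre0; simp at hμre0
  have hμnorm : |b| ≤ ‖μ‖ := by
    have := Complex.abs_im_le_norm μ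
    simpa [hμdef] using this
  have hμnormpos : (0:ℝ) < ‖μ‖ := lt_of_lt_of_le (abs_pos.mpr hb) hμnorm
  have hane : a ≠ 0 := by
    intro h; rw [h] at ha₂; simp at ha₂
  have hR0 : (0:ℝ) < R := by linarith
  -- the functions
  set u : ℝ → ℂ := fun x => (x : ℂ) ^ a with hu
  set u' : ℝ → ℂ := fun x => a * (x : ℂ) ^ (a - 1) with hu'
  set w : ℝ → ℂ := fun x => Complex.exp (-(μ * x)) / (-μ) with hw
  set v' : ℝ → ℂ := fun x => Complex.exp (-(μ * x)) with hv'
  have hud : ∀ x : ℝ, 0 < x → HasDerivAt u (u' x) x := by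
    intro x hx
    have h := hasDerivAt_ofReal_cpow_const' hx.ne' (r := a - 1)
      (by intro h; exact hane (by linear_combination h))
    have h2 := h.const_mul a
    have heq : (fun y : ℝ => a * ((y:ℂ) ^ (a - 1 + 1) / (a - 1 + 1))) = u := by
      funext y
      rw [hu]
      simp only [sub_add_cancel]
      field_simp
    rw [heq] at h2
    exact h2
  have hwd : ∀ x : ℝ, HasDerivAt w (v' x) x := by
    intro x
    have h1 : HasDerivAt (fun x : ℝ => -(μ * (x:ℂ))) (-(μ * 1)) x :=
      ((Complex.ofRealCLM.hasDerivAt.const_mul μ)).neg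
    have h2 := (h1.cexp).div_const (-μ)
    have : Complex.exp (-(μ * x)) * -(μ * 1) / (-μ) = v' x := by
      rw [hv']; field_simp
    rw [this] at h2
    exact h2
  have hcont_u' : ContinuousOn u' (Ioi (0:ℝ)) := by
    intro x hx
    exact (ContinuousAt.continuousWithinAt
      (((Complex.continuousAt_ofReal_cpow_const x (a-1) (Or.inr (ne_of_gt hx))).const_mul a)))
  -- integrable on Ioi R
  have hInt1 : IntegrableOn (fun x : ℝ => u x * v' x) (Ioi R) :=
    (integrableOn_cpow_exp ha₁ hμre0).mono_set (Ioi_subset_Ioi hR0.le)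
  have hIntrpow : IntegrableOn (fun x : ℝ => x ^ (a.re - 1)) (Ioi R) :=
    integrableOn_Ioi_rpow_of_lt (by linarith) hR0
  have hInt2 : IntegrableOn (fun x : ℝ => u' x * w x) (Ioi R) := by
    refine Integrable.mono' (hIntrpow.const_mul (‖a‖ / ‖μ‖)) ?_ ?_
    · exact (((Complex.measurable_ofReal.pow measurable_const).const_mul a).mul
        (((Complex.measurable_ofReal.const_mul μ).neg.cexp).div_const (-μ))).aestronglyMeasurable
    · filter_upwards [self_mem_ae_restrict measurableSet_Ioi] with x hx
      have hx0 : (0:ℝ) < x := lt_trans hR0 hx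
      rw [hu', hw]
      simp only
      rw [norm_mul, norm_mul, norm_div, norm_neg]
      rw [Complex.norm_cpow_eq_rpow_re_of_pos hx0,
        Complex.norm_exp]
      have h5 : (-(μ * (x:ℂ))).re = -(δ * x) := by
        simp [hμdef, Complex.mul_re]
      rw [h5]
      have h6 : Real.exp (-(δ * x)) ≤ 1 := by
        apply Real.exp_le_one_iff.mpr; nlinarith
      have h7 : (a - 1).re = a.re - 1 := by simp
      rw [h7]
      calc ‖a‖ * x ^ (a.re - 1) * (Real.exp (-(δ * x)) / ‖μ‖)
          ≤ ‖a‖ * x ^ (a.re - 1) * (1 / ‖μ‖) := by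
            apply mul_le_mul_of_nonneg_left _ (by positivity)
            apply div_le_div_of_nonneg_right h6 hμnormpos.le |>.trans_eq rfl
        _ = ‖a‖ / ‖μ‖ * x ^ (a.re - 1) := by ring
  -- IBP identity eventually
  have hibp : ∀ᶠ S in (atTop : Filter ℝ), ∫ x in R..S, u x * v' x
      = u S * w S - u R * w R - ∫ x in R..S, u' x * w x := by
    filter_upwards [eventually_ge_atTop R] with S hS
    apply intervalIntegral.integral_mul_deriv_eq_deriv_mul
    · intro x hx
      rw [uIcc_of_le hS] at hx
      exact hud x (by linarith [hx.1])
    · intro x hx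
      exact hwd x
    · apply ContinuousOn.intervalIntegrable
      apply hcont_u'.mono
      rw [uIcc_of_le hS]
      intro x hx
      exact lt_of_lt_of_le hR0 hx.1
    · exact (Complex.continuous_exp.comp
        ((continuous_const.mul Complex.continuous_ofReal).neg)).continuousOn.intervalIntegrable
  -- limits
  have T1 : Tendsto (fun S => ∫ x in R..S, u x * v' x) atTop (𝓝 (∫ x in Ioi R, u x * v' x)) :=
    intervalIntegral_tendsto_integral_Ioi R hInt1 tendsto_id
  have T3 : Tendsto (fun S => ∫ x in R..S, u' x * w x) atTop (𝓝 (∫ x in Ioi R, u' x * w x)) :=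
    intervalIntegral_tendsto_integral_Ioi R hInt2 tendsto_id
  have T2 : Tendsto (fun S => u S * w S) atTop (𝓝 0) := by
    apply squeeze_zero_norm' (a := fun S => S ^ a.re / ‖μ‖)
    · filter_upwards [eventually_ge_atTop 1] with S hS
      have hS0 : (0:ℝ) < S := by linarith
      rw [hu, hw]
      simp only
      rw [norm_mul, norm_div, norm_neg,
        Complex.norm_cpow_eq_rpow_re_of_pos hS0,
        Complex.norm_exp]
      have h5 : (-(μ * (S:ℂ))).re = -(δ * S) := by simp [hμdef, Complex.mul_re]
      rw [h5]
      have h6 : Real.exp (-(δ * S)) ≤ 1 := by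
        apply Real.exp_le_one_iff.mpr; nlinarith
      calc S ^ a.re * (Real.exp (-(δ * S)) / ‖μ‖) ≤ S ^ a.re * (1 / ‖μ‖) := by
            apply mul_le_mul_of_nonneg_left _ (by positivity)
            exact div_le_div_of_nonneg_right h6 hμnormpos.le |>.trans_eq rfl
        _ = S ^ a.re / ‖μ‖ := by ring
    · have h8 : Tendsto (fun S : ℝ => S ^ a.re) atTop (𝓝 0) := by
        have := tendsto_rpow_neg_atTop (y := -a.re) (by linarith)
        simpa using this
      simpa using h8.div_const ‖μ‖
  have hIdent : ∫ x in Ioi R, u x * v' x = -(u R * w R) - ∫ x in Ioi R, u' x * w x := by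
    have TR : Tendsto (fun S => u S * w S - u R * w R - ∫ x in R..S, u' x * w x) atTop
        (𝓝 (0 - u R * w R - ∫ x in Ioi R, u' x * w x)) :=
      (T2.sub tendsto_const_nhds).sub T3
    have := tendsto_nhds_unique (T1.congr' hibp) TR
    rw [this]; ring
  -- bound
  have hb1 : ‖u R * w R‖ ≤ R ^ a.re / ‖μ‖ := by
    rw [hu, hw]
    simp only
    rw [norm_mul, norm_div, norm_neg,
      Complex.norm_cpow_eq_rpow_re_of_pos hR0,
      Complex.norm_exp]
    have h5 : (-(μ * (R:ℂ))).re = -(δ * R) := by simp [hμdef, Complex.mul_re]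
    rw [h5]
    have h6 : Real.exp (-(δ * R)) ≤ 1 := by
      apply Real.exp_le_one_iff.mpr; nlinarith
    calc R ^ a.re * (Real.exp (-(δ * R)) / ‖μ‖) ≤ R ^ a.re * (1 / ‖μ‖) := by
          apply mul_le_mul_of_nonneg_left _ (by positivity)
          exact div_le_div_of_nonneg_right h6 hμnormpos.le |>.trans_eq rfl
      _ = R ^ a.re / ‖μ‖ := by ring
  have hb2 : ‖∫ x in Ioi R, u' x * w x‖ ≤ ‖a‖ / ‖μ‖ * (R ^ a.re / (-a.re)) := by
    have h9 := norm_integral_le_of_norm_le (f := fun x => u' x * w x)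
      (g := fun x => ‖a‖ / ‖μ‖ * x ^ (a.re - 1)) (hIntrpow.const_mul _) ?_
    · rw [integral_const_mul, integral_Ioi_rpow_of_lt (by linarith) hR0] at h9
      have : -R ^ (a.re - 1 + 1) / (a.re - 1 + 1) = R ^ a.re / (-a.re) := by
        rw [sub_add_cancel]; ring
      rwa [this] at h9
    · filter_upwards [self_mem_ae_restrict measurableSet_Ioi] with x hx
      have hx0 : (0:ℝ) < x := lt_trans hR0 hx
      rw [hu', hw]
      simp only
      rw [norm_mul, norm_mul, norm_div, norm_neg,
        Complex.norm_cpow_eq_rpow_re_of_pos hx0,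
        Complex.norm_exp]
      have h5 : (-(μ * (x:ℂ))).re = -(δ * x) := by simp [hμdef, Complex.mul_re]
      rw [h5]
      have h6 : Real.exp (-(δ * x)) ≤ 1 := by
        apply Real.exp_le_one_iff.mpr; nlinarith
      have h7 : (a - 1).re = a.re - 1 := by simp
      rw [h7]
      calc ‖a‖ * x ^ (a.re - 1) * (Real.exp (-(δ * x)) / ‖μ‖)
          ≤ ‖a‖ * x ^ (a.re - 1) * (1 / ‖μ‖) := by
            apply mul_le_mul_of_nonneg_left _ (by positivity)
            exact div_le_div_of_nonneg_right h6 hμnormpos.le |>.trans_eq rfl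
        _ = ‖a‖ / ‖μ‖ * x ^ (a.re - 1) := by ring
  calc ‖∫ x in Ioi R, u x * v' x‖
      ≤ ‖u R * w R‖ + ‖∫ x in Ioi R, u' x * w x‖ := by
        rw [hIdent]
        refine (norm_sub_le _ _).trans ?_
        simp
    _ ≤ R ^ a.re / ‖μ‖ + ‖a‖ / ‖μ‖ * (R ^ a.re / (-a.re)) := add_le_add hb1 hb2
    _ = R ^ a.re * (1 + ‖a‖ / (-a.re)) / ‖μ‖ := by
        field_simp
    _ ≤ R ^ a.re * (1 + ‖a‖ / (-a.re)) / |b| := by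
        have hna : (0:ℝ) < -a.re := by linarith
        have hX : (0:ℝ) ≤ R ^ a.re * (1 + ‖a‖ / (-a.re)) := by positivity
        exact div_le_div_of_nonneg_left hX (abs_pos.mpr hb) hμnorm

lemma integrableOn_Ioc_rpow {R : ℝ} (hR : 0 ≤ R) {s : ℝ} (hs : -1 < s) :
    IntegrableOn (fun x : ℝ => x ^ s) (Ioc 0 R) := by
  have h := intervalIntegral.intervalIntegrable_rpow' (a := 0) (b := R) hs
  rwa [intervalIntegrable_iff_integrableOn_Ioc_of_le hR] at h

lemma L2b {a : ℂ} (ha₁ : -1 < a.re) (ha₂ : a.re < 0) {b : ℝ} (hb : b ≠ 0) {R : ℝ} (hR : 1 ≤ R) :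
    ‖(∫ v in Ioc (0:ℝ) R, (v : ℂ) ^ a * Complex.exp (-(((b : ℂ) * Complex.I) * v))) - Kker a b‖ ≤
      R ^ a.re * (1 + ‖a‖ / (-a.re)) / |b| := by
  have hR0 : (0:ℝ) < R := by linarith
  set δ : ℕ → ℝ := fun n => ((n:ℝ)+1)⁻¹ with hδdef
  have hδpos : ∀ n, 0 < δ n := fun n => by positivity
  have hδ0 : Tendsto δ atTop (𝓝 0) := by
    have := tendsto_one_div_add_atTop_nhds_zero_nat (𝕜 := ℝ)
    simpa [hδdef, one_div] using this
  set μ : ℕ → ℂ := fun n => (δ n : ℂ) + b * Complex.I with hμdef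
  have hμre : ∀ n, (μ n).re = δ n := fun n => by simp [hμdef]
  have hμt : Tendsto μ atTop (𝓝 ((b:ℂ) * Complex.I)) := by
    have h0 : Tendsto (fun n => ((δ n : ℝ) : ℂ)) atTop (𝓝 0) := by
      have := (Complex.continuous_ofReal.tendsto 0).comp hδ0
      simpa [Function.comp_def] using this
    have := h0.add_const ((b:ℂ) * Complex.I)
    simpa using this
  have h1 : Tendsto (fun n => ∫ v in Ioc (0:ℝ) R, (v : ℂ) ^ a * Complex.exp (-((μ n) * v)))
      atTop (𝓝 (∫ v in Ioc (0:ℝ) R, (v : ℂ) ^ a * Complex.exp (-(((b : ℂ) * Complex.I) * v)))) := by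
    apply tendsto_integral_filter_of_dominated_convergence (bound := fun v => v ^ a.re)
    · exact Eventually.of_forall fun n => (measurable_cpow_exp a (μ n)).aestronglyMeasurable
    · apply Eventually.of_forall; intro n
      filter_upwards [self_mem_ae_restrict measurableSet_Ioc] with v hv
      rw [norm_cpow_exp hv.1 a (μ n), hμre]
      have h6 : Real.exp (-δ n * v) ≤ 1 :=
        Real.exp_le_one_iff.mpr (by nlinarith [hδpos n, hv.1.le])
      calc v ^ a.re * Real.exp (-δ n * v) ≤ v ^ a.re * 1 :=
            mul_le_mul_of_nonneg_left h6 (Real.rpow_nonneg hv.1.le _)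
        _ = v ^ a.re := mul_one _
    · exact integrableOn_Ioc_rpow hR0.le ha₁
    · filter_upwards [self_mem_ae_restrict measurableSet_Ioc] with v _
      apply Tendsto.const_mul
      exact (Complex.continuous_exp.tendsto _).comp ((hμt.mul_const ((v:ℝ):ℂ)).neg)
  have hsplit : ∀ n, ∫ v in Ioc (0:ℝ) R, (v : ℂ) ^ a * Complex.exp (-((μ n) * v))
      = (Complex.Gamma (a+1) * Complex.exp (-((a+1) * Complex.log (μ n))))
        - ∫ v in Ioi R, (v : ℂ) ^ a * Complex.exp (-((μ n) * v)) := by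
    intro n
    have hposre : 0 < (μ n).re := by rw [hμre]; exact hδpos n
    have hsplit2 : ∫ v in Ioi (0:ℝ), (v : ℂ) ^ a * Complex.exp (-((μ n) * v))
        = (∫ v in Ioc (0:ℝ) R, (v : ℂ) ^ a * Complex.exp (-((μ n) * v)))
          + ∫ v in Ioi R, (v : ℂ) ^ a * Complex.exp (-((μ n) * v)) := by
      rw [← Ioc_union_Ioi_eq_Ioi hR0.le]
      exact setIntegral_union (Ioc_disjoint_Ioi le_rfl) measurableSet_Ioi
        ((integrableOn_cpow_exp ha₁ hposre).mono_set Ioc_subset_Ioi_self)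
        ((integrableOn_cpow_exp ha₁ hposre).mono_set (Ioi_subset_Ioi hR0.le))
    rw [← L1 ha₁ hposre, hsplit2]
    ring
  have h3 : Tendsto (fun n => Complex.Gamma (a+1) * Complex.exp (-((a+1) * Complex.log (μ n))))
      atTop (𝓝 (Kker a b)) := by
    unfold Kker
    apply Tendsto.const_mul
    apply (Complex.continuous_exp.tendsto _).comp
    apply Tendsto.neg
    apply Tendsto.const_mul
    have hslit : (b:ℂ) * Complex.I ∈ Complex.slitPlane :=
      Complex.mem_slitPlane_iff.mpr (Or.inr (by simp [hb]))
    exact hμt.clog hslit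
  have hTail : Tendsto (fun n => ∫ v in Ioi R, (v : ℂ) ^ a * Complex.exp (-((μ n)*v))) atTop
      (𝓝 (Kker a b - ∫ v in Ioc (0:ℝ) R, (v : ℂ) ^ a *
        Complex.exp (-(((b:ℂ) * Complex.I) * v)))) := by
    apply (h3.sub h1).congr
    intro n
    rw [hsplit n]
    ring
  have hfin := le_of_tendsto hTail.norm
    (Eventually.of_forall fun n => tail_bound ha₁ ha₂ hb (hδpos n) hR)
  rwa [norm_sub_rev] at hfin

lemma L2a {a : ℂ} (ha₁ : -1 < a.re) (ha₂ : a.re < 0) {b : ℝ} (hb : b ≠ 0) :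
    Tendsto (fun R : ℝ => ∫ v in Ioc (0:ℝ) R,
        (v : ℂ) ^ a * Complex.exp (-(((b : ℂ) * Complex.I) * v)))
      atTop (𝓝 (Kker a b)) := by
  rw [← tendsto_sub_nhds_zero_iff]
  apply squeeze_zero_norm' (a := fun R => R ^ a.re * (1 + ‖a‖ / (-a.re)) / |b|)
  · filter_upwards [eventually_ge_atTop 1] with R hR
    exact L2b ha₁ ha₂ hb hR
  · have h8 : Tendsto (fun S : ℝ => S ^ a.re) atTop (𝓝 0) := by
      have := tendsto_rpow_neg_atTop (y := -a.re) (by linarith)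
      simpa using this
    have := (h8.mul_const (1 + ‖a‖ / (-a.re))).div_const |b|
    simpa using this

lemma lemA (φ : ℝ → ℂ) (hφc : Continuous φ) (hsupp : Function.support φ ⊆ Set.Icc 1 2)
    {a : ℂ} (ha₁ : -1 < a.re) (ha₂ : a.re < 0) {ε : ℝ} (hε : ε = -1 ∨ ε = 1) :
    Tendsto (fun R : ℝ => ∫ v in (0:ℝ)..R, fourierHat φ (ε * v) * (v : ℂ) ^ a) atTop
      (𝓝 (∫ t in Ioi (0:ℝ), φ t * Kker a (2 * π * ε * t))) := by
  have hεabs : |ε| = 1 := by rcases hε with h | h <;> simp [h]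
  have hεne : ε ≠ 0 := by rcases hε with h | h <;> simp [h]
  have hφi : Integrable φ := by
    apply hφc.integrable_of_hasCompactSupport
    apply HasCompactSupport.intro (isCompact_Icc (a := (1:ℝ)) (b := 2))
    intro x hx
    by_contra h
    exact hx (hsupp h)
  set J : ℝ → ℝ → ℂ := fun R t => ∫ v in Ioc (0:ℝ) R,
    (v : ℂ) ^ a * Complex.exp (-((((2*π*ε*t : ℝ) : ℂ) * Complex.I) * v)) with hJdef
  -- Fubini step
  have key : ∀ R : ℝ, 1 ≤ R → ∫ v in (0:ℝ)..R, fourierHat φ (ε * v) * (v : ℂ) ^ a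
      = ∫ t : ℝ, φ t * J R t := by
    intro R hR
    have hR0 : (0:ℝ) < R := by linarith
    have hInt : Integrable (Function.uncurry fun (v t : ℝ) =>
        φ t * Complex.exp (-(2 * ↑π * Complex.I * ↑(ε * v) * ↑t)) * (v : ℂ) ^ a)
        ((volume.restrict (Ioc 0 R)).prod volume) := by
      constructor
      · have m1 : Measurable fun p : ℝ × ℝ => φ p.2 := hφc.measurable.comp measurable_snd
        have m2 : Measurable fun p : ℝ × ℝ =>
            Complex.exp (-(2 * ↑π * Complex.I * ↑(ε * p.1) * ↑p.2)) := by
          apply Measurable.cexp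
          apply Measurable.neg
          exact (measurable_const.mul
            (Complex.measurable_ofReal.comp (measurable_fst.const_mul ε))).mul
            (Complex.measurable_ofReal.comp measurable_snd)
        have m3 : Measurable fun p : ℝ × ℝ => ((p.1 : ℝ) : ℂ) ^ a :=
          (Complex.measurable_ofReal.comp measurable_fst).pow measurable_const
        exact ((m1.mul m2).mul m3).aestronglyMeasurable
      · have hgint : Integrable (fun p : ℝ × ℝ => p.1 ^ a.re * ‖φ p.2‖)
            ((volume.restrict (Ioc 0 R)).prod volume) :=
          Integrable.mul_prod (integrableOn_Ioc_rpow hR0.le ha₁) hφi.norm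
        apply HasFiniteIntegral.mono' hgint.2
        have hmeq : (volume.restrict (Ioc (0:ℝ) R)).prod (volume : Measure ℝ)
            = ((volume : Measure ℝ).prod (volume : Measure ℝ)).restrict
              ((Ioc (0:ℝ) R) ×ˢ (univ : Set ℝ)) := by
          rw [← Measure.prod_restrict, Measure.restrict_univ]
        rw [hmeq]
        filter_upwards [self_mem_ae_restrict (measurableSet_Ioc.prod MeasurableSet.univ)]
          with p hp
        have hv : (0:ℝ) < p.1 := hp.1.1
        have hexp : -(2 * ↑π * Complex.I * ↑(ε * p.1) * ↑p.2)
            = ((-(2 * π * (ε * p.1) * p.2) : ℝ) : ℂ) * Complex.I := by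
          push_cast; ring
        rw [Function.uncurry, norm_mul, norm_mul, hexp,
          Complex.norm_exp_ofReal_mul_I,
          Complex.norm_cpow_eq_rpow_re_of_pos hv]
        calc ‖φ p.2‖ * 1 * p.1 ^ a.re = p.1 ^ a.re * ‖φ p.2‖ := by ring
          _ ≤ _ := le_rfl
    calc ∫ v in (0:ℝ)..R, fourierHat φ (ε * v) * (v : ℂ) ^ a
        = ∫ v in Ioc (0:ℝ) R, fourierHat φ (ε * v) * (v : ℂ) ^ a := by
          rw [intervalIntegral.integral_of_le hR0.le]
      _ = ∫ v in Ioc (0:ℝ) R, ∫ t : ℝ,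
            φ t * Complex.exp (-(2 * ↑π * Complex.I * ↑(ε * v) * ↑t)) * (v : ℂ) ^ a := by
          apply setIntegral_congr_fun measurableSet_Ioc
          intro v _
          simp only [fourierHat]
          exact (integral_mul_const _ _).symm
      _ = ∫ t : ℝ, ∫ v in Ioc (0:ℝ) R,
            φ t * Complex.exp (-(2 * ↑π * Complex.I * ↑(ε * v) * ↑t)) * (v : ℂ) ^ a := by
          exact integral_integral_swap hInt
      _ = ∫ t : ℝ, φ t * J R t := by
          congr 1
          funext t
          rw [hJdef]
          simp only
          rw [← integral_const_mul]
          apply setIntegral_congr_fun measurableSet_Ioc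
          intro v _
          have hexp : -(2 * ↑π * Complex.I * ↑(ε * v) * ↑t)
              = -((((2*π*ε*t : ℝ) : ℂ) * Complex.I) * v) := by
            push_cast; ring
          show φ t * Complex.exp (-(2 * ↑π * Complex.I * ↑(ε * v) * ↑t)) * (v : ℂ) ^ a
            = φ t * ((v : ℂ) ^ a * Complex.exp (-((((2*π*ε*t : ℝ) : ℂ) * Complex.I) * v)))
          rw [hexp]
          ring
  -- continuity of J R
  have hJcont : ∀ R : ℝ, Continuous (J R) := by
    intro R
    rcases le_or_gt R 0 with hR | hR
    · have : ∀ t, J R t = 0 := by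
        intro t
        rw [hJdef]
        simp only
        rw [Ioc_eq_empty (by linarith), Measure.restrict_empty, integral_zero_measure]
      simp only [hJdef] at this ⊢
      rw [show (fun t => J R t) = fun _ => (0:ℂ) from funext this]
      exact continuous_const
    · apply continuous_of_dominated (bound := fun v => v ^ a.re)
      · exact fun t => (measurable_cpow_exp a _).aestronglyMeasurable
      · intro t
        filter_upwards [self_mem_ae_restrict measurableSet_Ioc] with v hv
        rw [norm_cpow_exp hv.1 a _]
        have : (((2*π*ε*t : ℝ) : ℂ) * Complex.I).re = 0 := by simp
        rw [this]
        simp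
      · exact integrableOn_Ioc_rpow hR.le ha₁
      · filter_upwards [self_mem_ae_restrict measurableSet_Ioc] with v _
        apply Continuous.mul continuous_const
        apply Complex.continuous_exp.comp
        apply Continuous.neg
        apply Continuous.mul _ continuous_const
        exact (Complex.continuous_ofReal.comp (continuous_const.mul continuous_id)).mul
          continuous_const
  -- uniform bound for the kernel on [1,2]
  have hKcont : ContinuousOn (fun t : ℝ => Kker a (2*π*ε*t)) (Icc 1 2) := by
    intro t ht
    have ht0 : (0:ℝ) < t := lt_of_lt_of_le one_pos ht.1
    have hbne : 2*π*ε*t ≠ 0 := by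
      have : (0:ℝ) < π := Real.pi_pos
      rcases hε with h | h <;> rw [h] <;> nlinarith
    apply ContinuousAt.continuousWithinAt
    apply ContinuousAt.mul continuousAt_const
    apply ContinuousAt.cexp
    apply ContinuousAt.neg
    apply ContinuousAt.mul continuousAt_const
    apply ContinuousAt.clog
    · exact ((Complex.continuous_ofReal.comp (continuous_const.mul continuous_id)).mul
        continuous_const).continuousAt
    · exact Complex.mem_slitPlane_iff.mpr (Or.inr (by simpa using hbne))
  obtain ⟨C, hC⟩ := isCompact_Icc.exists_bound_of_continuousOn hKcont
  set C' : ℝ := C + (1 + ‖a‖ / (-a.re)) with hC'def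
  -- DCT
  have hDCT : Tendsto (fun R => ∫ t : ℝ, φ t * J R t) atTop
      (𝓝 (∫ t : ℝ, φ t * Kker a (2*π*ε*t))) := by
    apply tendsto_integral_filter_of_dominated_convergence (bound := fun t => ‖φ t‖ * C')
    · exact Eventually.of_forall fun R => (hφc.mul (hJcont R)).aestronglyMeasurable
    · filter_upwards [eventually_ge_atTop (1:ℝ)] with R hR
      apply Eventually.of_forall
      intro t
      by_cases hφt : φ t = 0
      · rw [hφt]
        simp
      · have htmem : t ∈ Icc (1:ℝ) 2 := hsupp hφt
        have ht0 : (0:ℝ) < t := lt_of_lt_of_le one_pos htmem.1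
        have hπ : (0:ℝ) < π := Real.pi_pos
        have hbne : 2*π*ε*t ≠ 0 := by
          rcases hε with h | h <;> rw [h] <;> nlinarith
        have hbabs : 1 ≤ |2*π*ε*t| := by
          have : |2*π*ε*t| = 2*π*t := by
            rw [abs_mul, abs_mul, abs_mul, hεabs]
            rw [abs_of_pos hπ, abs_of_pos ht0]
            norm_num
          rw [this]
          nlinarith [htmem.1, Real.pi_gt_three]
        have hJb : ‖J R t‖ ≤ C' := by
          have h1 := L2b ha₁ ha₂ hbne (R := R) hR
          have h2 : ‖J R t‖ ≤ ‖J R t - Kker a (2*π*ε*t)‖ + ‖Kker a (2*π*ε*t)‖ := by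
            have h2' := norm_add_le (J R t - Kker a (2*π*ε*t)) (Kker a (2*π*ε*t))
            rwa [sub_add_cancel] at h2'
          have h3 : R ^ a.re * (1 + ‖a‖ / (-a.re)) / |2*π*ε*t| ≤ 1 + ‖a‖ / (-a.re) := by
            have hRh : R ^ a.re ≤ 1 := Real.rpow_le_one_of_one_le_of_nonpos hR (by linarith)
            have hX : (0:ℝ) ≤ 1 + ‖a‖ / (-a.re) := by
              have : (0:ℝ) < -a.re := by linarith
              positivity
            calc R ^ a.re * (1 + ‖a‖ / (-a.re)) / |2*π*ε*t|
                ≤ 1 * (1 + ‖a‖ / (-a.re)) / 1 := by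
                  gcongr <;> first | exact hRh | exact hbabs | exact hX | positivity
              _ = 1 + ‖a‖ / (-a.re) := by ring
          calc ‖J R t‖ ≤ ‖J R t - Kker a (2*π*ε*t)‖ + ‖Kker a (2*π*ε*t)‖ := h2
            _ ≤ (1 + ‖a‖ / (-a.re)) + C := add_le_add (h1.trans h3) (hC t htmem)
            _ = C' := by rw [hC'def]; ring
        rw [norm_mul]
        exact mul_le_mul_of_nonneg_left hJb (norm_nonneg _)
    · exact hφi.norm.mul_const C'
    · apply Eventually.of_forall
      intro t
      by_cases hφt : φ t = 0
      · rw [hφt]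
        simp only [zero_mul]
        exact tendsto_const_nhds
      · have htmem : t ∈ Icc (1:ℝ) 2 := hsupp hφt
        have ht0 : (0:ℝ) < t := lt_of_lt_of_le one_pos htmem.1
        have hπ : (0:ℝ) < π := Real.pi_pos
        have hbne : 2*π*ε*t ≠ 0 := by
          rcases hε with h | h <;> rw [h] <;> nlinarith
        exact (L2a ha₁ ha₂ hbne).const_mul (φ t)
  -- assemble
  have hIoi : ∫ t : ℝ, φ t * Kker a (2*π*ε*t) = ∫ t in Ioi (0:ℝ), φ t * Kker a (2*π*ε*t) := by
    symm
    apply setIntegral_eq_integral_of_forall_compl_eq_zero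
    intro t ht
    have : φ t = 0 := by
      by_contra h
      have := (hsupp h).1
      simp only [mem_Ioi, not_lt] at ht
      linarith
    rw [this, zero_mul]
  rw [← hIoi]
  apply hDCT.congr'
  filter_upwards [eventually_ge_atTop (1:ℝ)] with R hR
  exact (key R hR).symm

lemma key_chi (a : ℂ) {t : ℝ} (ht : 0 < t) :
    Kker a (2 * π * (-1) * t) + Kker a (2 * π * 1 * t) = chiF (-a) * (t : ℂ) ^ (-a - 1) := by
  have hπ := Real.pi_pos
  have h2πt : (0:ℝ) < 2 * π * t := by positivity
  set L : ℝ := Real.log (2 * π * t) with hLdef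
  have hexpL : Complex.exp (L : ℂ) = ((2 * π * t : ℝ) : ℂ) := by
    rw [show ((L:ℝ):ℂ) = ((L:ℝ):ℂ) from rfl, ← Complex.ofReal_exp, Real.exp_log h2πt]
  -- log computations
  have hlogp : Complex.log (((2 * π * 1 * t : ℝ) : ℂ) * Complex.I)
      = (L : ℂ) + ((π/2 : ℝ) : ℂ) * Complex.I := by
    have h1 : (((2 * π * 1 * t : ℝ) : ℂ) * Complex.I)
        = Complex.exp ((L : ℂ) + ((π/2 : ℝ) : ℂ) * Complex.I) := by
      rw [Complex.exp_add, hexpL, Complex.exp_mul_I, ← Complex.ofReal_cos, ← Complex.ofReal_sin,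
        Real.cos_pi_div_two, Real.sin_pi_div_two]
      push_cast
      ring
    rw [h1, Complex.log_exp] <;> simp [hπ.le] <;> linarith
  have hlogm : Complex.log (((2 * π * (-1) * t : ℝ) : ℂ) * Complex.I)
      = (L : ℂ) + ((-(π/2) : ℝ) : ℂ) * Complex.I := by
    have h1 : (((2 * π * (-1) * t : ℝ) : ℂ) * Complex.I)
        = Complex.exp ((L : ℂ) + ((-(π/2) : ℝ) : ℂ) * Complex.I) := by
      rw [Complex.exp_add, hexpL, Complex.exp_mul_I, ← Complex.ofReal_cos, ← Complex.ofReal_sin,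
        Real.cos_neg, Real.sin_neg, Real.cos_pi_div_two, Real.sin_pi_div_two]
      push_cast
      ring
    rw [h1, Complex.log_exp] <;> simp [hπ.le] <;> linarith
  set w : ℂ := a + 1 with hwdef
  -- LHS
  have hLHS : Kker a (2 * π * (-1) * t) + Kker a (2 * π * 1 * t)
      = Complex.Gamma w * Complex.exp (-(w * L)) * (2 * Complex.cos (w * ((π/2 : ℝ) : ℂ))) := by
    rw [Kker, Kker, hlogp, hlogm, ← hwdef]
    rw [show -(w * ((L : ℂ) + ((-(π/2) : ℝ) : ℂ) * Complex.I))
        = -(w * L) + (w * ((π/2:ℝ):ℂ)) * Complex.I by push_cast; ring]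
    rw [show -(w * ((L : ℂ) + ((π/2 : ℝ) : ℂ) * Complex.I))
        = -(w * L) + (-(w * ((π/2:ℝ):ℂ))) * Complex.I by push_cast; ring]
    rw [Complex.exp_add, Complex.exp_add, Complex.two_cos]
    ring
  rw [hLHS]
  -- cos → -sin
  have hcos : Complex.cos (w * ((π/2 : ℝ) : ℂ)) = -Complex.sin ((π:ℂ) * a / 2) := by
    rw [show w * ((π/2 : ℝ) : ℂ) = (π:ℂ) * a / 2 + (π:ℂ)/2 by rw [hwdef]; push_cast; ring]
    exact Complex.cos_add_pi_div_two _
  rw [hcos]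
  -- RHS expansion
  rw [chiF]
  have hgam : (1 : ℂ) - -a = w := by rw [hwdef]; ring
  rw [hgam]
  have hsin : Complex.sin ((π:ℂ) * -a / 2) = -Complex.sin ((π:ℂ) * a / 2) := by
    rw [show (π:ℂ) * -a / 2 = -((π:ℂ) * a / 2) by ring, Complex.sin_neg]
  rw [hsin]
  set l2 : ℝ := Real.log 2 with hl2def
  set lp : ℝ := Real.log π with hlpdef
  set lt : ℝ := Real.log t with hltdef
  have hLsum : (L : ℂ) = (l2 : ℂ) + (lp : ℂ) + (lt : ℂ) := by
    rw [hLdef, show (2 * π * t : ℝ) = 2 * π * t from rfl]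
    rw [Real.log_mul (by positivity) ht.ne', Real.log_mul (by norm_num) hπ.ne']
    push_cast
    ring
  have c2 : (2:ℂ) ^ (-a) = Complex.exp ((l2 : ℂ) * (-a)) := by
    rw [Complex.cpow_def_of_ne_zero two_ne_zero]
    congr 1
    rw [show (2:ℂ) = ((2:ℝ):ℂ) by norm_num, ← Complex.ofReal_log (by norm_num : (0:ℝ) ≤ 2)]
  have cp : (π:ℂ) ^ (-a - 1) = Complex.exp ((lp : ℂ) * (-a - 1)) := by
    rw [Complex.cpow_def_of_ne_zero (Complex.ofReal_ne_zero.mpr hπ.ne')]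
    congr 1
    rw [← Complex.ofReal_log hπ.le]
  have ct : ((t:ℝ):ℂ) ^ (-a - 1) = Complex.exp ((lt : ℂ) * (-a - 1)) := by
    rw [Complex.cpow_def_of_ne_zero (Complex.ofReal_ne_zero.mpr ht.ne')]
    congr 1
    rw [← Complex.ofReal_log ht.le]
  rw [c2, cp, ct]
  -- split exp(-(w L))
  have hsplit : Complex.exp (-(w * (L:ℂ))) * 2
      = Complex.exp ((l2:ℂ) * (-a)) * Complex.exp ((lp:ℂ) * (-a-1))
        * Complex.exp ((lt:ℂ) * (-a-1)) := by
    have h2e : (2:ℂ) = Complex.exp (l2 : ℂ) := by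
      rw [← Complex.ofReal_exp, hl2def, Real.exp_log (by norm_num : (0:ℝ) < 2)]
      norm_num
    rw [h2e, ← Complex.exp_add, ← Complex.exp_add, ← Complex.exp_add]
    congr 1
    rw [hLsum, hwdef]
    ring
  calc Complex.Gamma w * Complex.exp (-(w * L)) * (2 * -Complex.sin ((π:ℂ) * a / 2))
      = (Complex.exp (-(w * (L:ℂ))) * 2) * (Complex.Gamma w * -Complex.sin ((π:ℂ) * a / 2)) := by
        ring
    _ = _ := by
        rw [hsplit]
        ring

lemma contAt_Kker (a : ℂ) {e : ℝ} (he : e ≠ 0) {t : ℝ} (ht : 0 < t) :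
    ContinuousAt (fun t : ℝ => Kker a (2 * π * e * t)) t := by
  have hπ := Real.pi_pos
  have hbne : 2 * π * e * t ≠ 0 := by positivity
  apply ContinuousAt.mul continuousAt_const
  apply ContinuousAt.cexp
  apply ContinuousAt.neg
  apply ContinuousAt.mul continuousAt_const
  apply ContinuousAt.clog
  · exact ((Complex.continuous_ofReal.comp (continuous_const.mul continuous_id)).mul
      continuous_const).continuousAt
  · exact Complex.mem_slitPlane_iff.mpr (Or.inr (by simpa using hbne))

lemma cont_mul_of_support (φ : ℝ → ℂ) (hφc : Continuous φ)
    (hsupp : Function.support φ ⊆ Set.Icc 1 2)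
    (g : ℝ → ℂ) (hg : ∀ t : ℝ, 0 < t → ContinuousAt g t) :
    Continuous (fun t => φ t * g t) := by
  rw [continuous_iff_continuousAt]
  intro t₀
  rcases lt_or_ge t₀ 1 with h | h
  · have hev : (fun t => φ t * g t) =ᶠ[𝓝 t₀] (fun _ => (0:ℂ)) := by
      filter_upwards [Iio_mem_nhds h] with t ht
      have : φ t = 0 := by
        by_contra hne
        exact absurd (hsupp hne).1 (not_le.mpr ht)
      rw [this, zero_mul]
    exact hev.continuousAt
  · exact (hφc.continuousAt).mul (hg t₀ (by linarith))

lemma thmB (ℓ : ℕ) (φ : ℝ → ℂ) (hφc : Continuous φ)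
    (hsupp : Function.support φ ⊆ Set.Icc 1 2)
    (a : Fin ℓ → ℂ) (ha : ∀ j, -1 < (a j).re ∧ (a j).re < 0)
    (ε : Fin ℓ → ℝ) (hε : ∀ j, ε j = -1 ∨ ε j = 1) (c : ℂ) :
    iterInt ℓ (fun v => c * (fourierHat φ (∑ j, ε j * v j) * ∏ j, ((v j : ℝ) : ℂ) ^ (a j)))
      = c * ∫ t in Set.Ioi (0:ℝ), φ t * ∏ j, Kker (a j) (2 * π * (ε j) * t) := by
  induction ℓ generalizing φ c with
  | zero =>
    have h1 : iterInt 0 (fun v => c * (fourierHat φ (∑ j, ε j * v j) *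
        ∏ j, ((v j : ℝ) : ℂ) ^ (a j))) = c * fourierHat φ 0 := by
      simp [iterInt]
    rw [h1]
    have h2 : fourierHat φ 0 = ∫ t : ℝ, φ t := by
      rw [fourierHat]
      simp
    rw [h2]
    have h3 : ∫ t in Ioi (0:ℝ), φ t * ∏ j : Fin 0, Kker (a j) (2 * π * (ε j) * t)
        = ∫ t : ℝ, φ t := by
      simp only [Finset.univ_eq_empty, Finset.prod_empty, mul_one]
      apply setIntegral_eq_integral_of_forall_compl_eq_zero
      intro t ht
      by_contra hne
      have := (hsupp hne).1
      simp only [mem_Ioi, not_lt] at ht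
      linarith
    rw [h3]
  | succ n IH =>
    have hε0 := hε 0
    have ha0 := ha 0
    -- the new weight function
    set Φ : ℝ → ℂ := fun t => φ t * ∏ j : Fin n, Kker (a j.succ) (2 * π * (ε j.succ) * t)
      with hΦdef
    have hΦc : Continuous Φ := by
      apply cont_mul_of_support φ hφc hsupp
      intro t ht
      apply tendsto_finset_prod
      intro j _
      exact contAt_Kker (a j.succ) (by rcases hε j.succ with h | h <;> rw [h] <;> norm_num) ht
    have hΦsupp : Function.support Φ ⊆ Set.Icc 1 2 := by
      intro t ht
      apply hsupp
      intro h0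
      apply ht
      rw [hΦdef]
      simp only
      rw [h0, zero_mul]
    -- fourier shift
    have hshift : ∀ (x₀ x : ℝ), fourierHat φ (x₀ + x)
        = fourierHat (fun t => φ t * Complex.exp (-(2 * ↑π * Complex.I * ↑x₀ * ↑t))) x := by
      intro x₀ x
      rw [fourierHat, fourierHat]
      congr 1
      funext t
      conv_rhs => rw [mul_assoc, ← Complex.exp_add]
      congr 2
      push_cast
      ring
    have claim1 : ∀ v₀ : ℝ, (iterInt n fun vs =>
        (fun v => c * (fourierHat φ (∑ j, ε j * v j) * ∏ j, ((v j : ℝ) : ℂ) ^ (a j)))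
          (Fin.cons v₀ vs))
        = (c * ((v₀ : ℝ) : ℂ) ^ (a 0)) * fourierHat Φ (ε 0 * v₀) := by
      intro v₀
      set φv : ℝ → ℂ := fun t => φ t * Complex.exp (-(2 * ↑π * Complex.I * ↑(ε 0 * v₀) * ↑t))
        with hφvdef
      have hφvc : Continuous φv := by
        apply hφc.mul
        apply Complex.continuous_exp.comp
        apply Continuous.neg
        exact (continuous_const.mul Complex.continuous_ofReal)
      have hφvsupp : Function.support φv ⊆ Set.Icc 1 2 := by
        intro t ht
        apply hsupp
        intro h0
        apply ht
        rw [hφvdef]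
        simp only
        rw [h0, zero_mul]
      have harg : (iterInt n fun vs =>
          (fun v => c * (fourierHat φ (∑ j, ε j * v j) * ∏ j, ((v j : ℝ) : ℂ) ^ (a j)))
            (Fin.cons v₀ vs))
          = iterInt n (fun vs => (c * ((v₀ : ℝ) : ℂ) ^ (a 0)) *
              (fourierHat φv (∑ j : Fin n, ε j.succ * vs j) *
                ∏ j : Fin n, ((vs j : ℝ) : ℂ) ^ (a j.succ))) := by
        congr 1
        funext vs
        simp only [Fin.sum_univ_succ, Fin.prod_univ_succ, Fin.cons_zero, Fin.cons_succ]
        rw [hshift (ε 0 * v₀) (∑ j : Fin n, ε j.succ * vs j)]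
        rw [← hφvdef]
        ring
      rw [harg]
      rw [IH φv hφvc hφvsupp (fun j => a j.succ) (fun j => ha j.succ) (fun j => ε j.succ)
        (fun j => hε j.succ) _]
      congr 1
      -- ∫ t in Ioi 0, φv t * ∏ K = fourierHat Φ (ε 0 * v₀)
      have h4 : ∀ t : ℝ, φv t * ∏ j : Fin n, Kker (a j.succ) (2 * π * (ε j.succ) * t)
          = Φ t * Complex.exp (-(2 * ↑π * Complex.I * ↑(ε 0 * v₀) * ↑t)) := by
        intro t
        rw [hφvdef, hΦdef]
        simp only
        ring
      rw [show (∫ t in Ioi (0:ℝ), φv t * ∏ j : Fin n, Kker (a j.succ) (2 * π * (ε j.succ) * t))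
          = ∫ t in Ioi (0:ℝ), Φ t * Complex.exp (-(2 * ↑π * Complex.I * ↑(ε 0 * v₀) * ↑t)) by
        exact setIntegral_congr_fun measurableSet_Ioi (fun t _ => h4 t)]
      rw [fourierHat]
      apply setIntegral_eq_integral_of_forall_compl_eq_zero
      intro t ht
      have hΦ0 : Φ t = 0 := by
        by_contra hne
        have := (hΦsupp hne).1
        simp only [mem_Ioi, not_lt] at ht
        linarith
      rw [hΦ0, zero_mul]
    -- now the outer integral
    show improperInt (fun v₀ => iterInt n fun vs =>
        (fun v => c * (fourierHat φ (∑ j, ε j * v j) * ∏ j, ((v j : ℝ) : ℂ) ^ (a j)))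
          (Fin.cons v₀ vs)) = _
    rw [show (fun v₀ : ℝ => iterInt n fun vs =>
        (fun v => c * (fourierHat φ (∑ j, ε j * v j) * ∏ j, ((v j : ℝ) : ℂ) ^ (a j)))
          (Fin.cons v₀ vs))
        = fun v₀ : ℝ => c * (fourierHat Φ (ε 0 * v₀) * ((v₀ : ℝ) : ℂ) ^ (a 0)) by
      funext v₀
      rw [claim1 v₀]
      ring]
    have hT := (lemA Φ hΦc hΦsupp ha0.1 ha0.2 hε0).const_mul c
    rw [improperInt]
    rw [show (fun R => ∫ v in (0:ℝ)..R, c * (fourierHat Φ (ε 0 * v) * ((v : ℝ) : ℂ) ^ (a 0)))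
        = fun R => c * ∫ v in (0:ℝ)..R, fourierHat Φ (ε 0 * v) * ((v : ℝ) : ℂ) ^ (a 0) by
      funext R
      exact intervalIntegral.integral_const_mul c _]
    rw [hT.limUnder_eq]
    congr 1
    apply setIntegral_congr_fun measurableSet_Ioi
    intro t _
    rw [hΦdef]
    simp only [Fin.prod_univ_succ]
    ring

/-- The lemma of Section 5: for `0 < Re(s+2-w_j-z_j) < 1`,
`Σ_{ε∈{±1}^ℓ} ∫₀^∞⋯∫₀^∞ ψ̂(ε₁v₁+⋯+ε_ℓ v_ℓ) ∏_j v_j^{s+1-w_j-z_j} dv_ℓ⋯dv₁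
 = ∫₀^∞ ψ(t) ∏_j χ(w_j+z_j-s-1) t^{w_j+z_j-s-2} dt`. -/
theorem stmt2 (ψ : ℝ → ℂ) (hψ : ContDiff ℝ (⊤ : ℕ∞) ψ) (hsupp : Function.support ψ ⊆ Set.Icc 1 2)
    (ℓ : ℕ) (hℓ : 1 ≤ ℓ) (s : ℂ) (w z : Fin ℓ → ℂ)
    (hwz : ∀ j, 0 < (s + 2 - w j - z j).re ∧ (s + 2 - w j - z j).re < 1) :
    ∑ ε ∈ Fintype.piFinset (fun _ : Fin ℓ => ({-1, 1} : Finset ℝ)),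
      iterInt ℓ (fun v => fourierHat ψ (∑ j, ε j * v j) *
        ∏ j, (v j : ℂ) ^ (s + 1 - w j - z j))
    = ∫ t in Set.Ioi (0:ℝ), ψ t *
        ∏ j, chiF (w j + z j - s - 1) * (t : ℂ) ^ (w j + z j - s - 2) := by
  set a : Fin ℓ → ℂ := fun j => s + 1 - w j - z j with hadef
  have hψc : Continuous ψ := hψ.continuous
  have ha : ∀ j, -1 < (a j).re ∧ (a j).re < 0 := by
    intro j
    have h1 := (hwz j).1
    have h2 := (hwz j).2
    have he : s + 2 - w j - z j = a j + 1 := by rw [hadef]; ring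
    rw [he, Complex.add_re, Complex.one_re] at h1 h2
    constructor <;> linarith
  have hmemε : ∀ ε ∈ Fintype.piFinset (fun _ : Fin ℓ => ({-1, 1} : Finset ℝ)),
      ∀ j, ε j = -1 ∨ ε j = 1 := by
    intro ε hmem j
    have := (Fintype.mem_piFinset.mp hmem) j
    simpa using this
  have hint : ∀ ε ∈ Fintype.piFinset (fun _ : Fin ℓ => ({-1, 1} : Finset ℝ)),
      IntegrableOn (fun t => ψ t * ∏ j, Kker (a j) (2 * π * (ε j) * t)) (Ioi (0:ℝ)) := by
    intro ε hmem
    have hcont : Continuous (fun t => ψ t * ∏ j, Kker (a j) (2 * π * (ε j) * t)) := by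
      apply cont_mul_of_support ψ hψc hsupp
      intro t ht
      apply tendsto_finset_prod
      intro j _
      exact contAt_Kker (a j) (by rcases hmemε ε hmem j with h | h <;> rw [h] <;> norm_num) ht
    have hcs : HasCompactSupport (fun t => ψ t * ∏ j, Kker (a j) (2 * π * (ε j) * t)) := by
      apply HasCompactSupport.intro (isCompact_Icc (a := (1:ℝ)) (b := 2))
      intro x hx
      have : ψ x = 0 := by
        by_contra hne
        exact hx (hsupp hne)
      rw [this, zero_mul]
    exact (hcont.integrable_of_hasCompactSupport hcs).integrableOn
  calc ∑ ε ∈ Fintype.piFinset (fun _ : Fin ℓ => ({-1, 1} : Finset ℝ)),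
      iterInt ℓ (fun v => fourierHat ψ (∑ j, ε j * v j) * ∏ j, (v j : ℂ) ^ (a j))
      = ∑ ε ∈ Fintype.piFinset (fun _ : Fin ℓ => ({-1, 1} : Finset ℝ)),
          ∫ t in Ioi (0:ℝ), ψ t * ∏ j, Kker (a j) (2 * π * (ε j) * t) := by
        apply Finset.sum_congr rfl
        intro ε hmem
        have h := thmB ℓ ψ hψc hsupp a ha ε (hmemε ε hmem) 1
        rw [one_mul] at h
        rw [← h]
        congr 1
        funext v
        rw [one_mul]
    _ = ∫ t in Ioi (0:ℝ), ∑ ε ∈ Fintype.piFinset (fun _ : Fin ℓ => ({-1, 1} : Finset ℝ)),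
          ψ t * ∏ j, Kker (a j) (2 * π * (ε j) * t) := (integral_finset_sum _ hint).symm
    _ = ∫ t in Set.Ioi (0:ℝ), ψ t *
        ∏ j, chiF (w j + z j - s - 1) * (t : ℂ) ^ (w j + z j - s - 2) := by
        apply setIntegral_congr_fun measurableSet_Ioi
        intro t ht
        show ∑ ε ∈ Fintype.piFinset fun _ => ({-1, 1} : Finset ℝ),
          ψ t * ∏ j : Fin ℓ, Kker (a j) (2 * π * ε j * t) = _
        rw [← Finset.mul_sum]
        congr 1
        have hps := Finset.prod_univ_sum (fun _ : Fin ℓ => ({-1, 1} : Finset ℝ))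
          (fun j e => Kker (a j) (2 * π * e * t))
        rw [← hps]
        apply Finset.prod_congr rfl
        intro j _
        rw [show ({-1, 1} : Finset ℝ) = insert (-1 : ℝ) {1} from rfl]
        rw [Finset.sum_insert (by norm_num), Finset.sum_singleton]
        rw [key_chi (a j) ht]
        congr 1
        · congr 1
          rw [hadef]
          ring
        · congr 1
          rw [hadef]
          ring
end

section
/- Let ℓ ≥ 1, let f_1,…,f_ℓ and g_1,…,g_ℓ be functions from the nonnegative integers to ℂ, and let X be real with 0 < X < 1 such that Σ_{n≥0} |f_i(n)| X^{n/2} < ∞ and Σ_{n≥0} |g_i(n)| X^{n/2} < ∞ for each i. Then the sum over all tuples (M_1,N_1,K_1,…,M_ℓ,N_ℓ,K_ℓ) of nonnegative integers satisfying M_1+⋯+M_ℓ = N_1+⋯+N_ℓ and min(M_i,N_i) = 0 for each i, of ∏_{i=1}^ℓ f_i(K_i+M_i)·g_i(K_i+N_i)·X^{K_i+M_i}, converges absolutely and equals Σ_{N≥0} (f_1∗⋯∗f_ℓ)(N)·(g_1∗⋯∗g_ℓ)(N)·X^N, where (f∗g)(N) := Σ_{a+b=N} f(a)g(b) is the Cauchy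 convolution. -/
/-!
Writing `K = min(m, n)`, `M = m - K`, `N = n - K` coordinatewise, the triples with
`min(Mᵢ, Nᵢ) = 0` correspond bijectively to pairs of tuples `(m, n) = (K + M, K + N)`, and the
constraint `ΣMᵢ = ΣNᵢ` becomes `Σmᵢ = Σnᵢ`. The series is thus a sum over pairs of tuples of
equal total size; grouping by that size `N` gives `(f₁∗⋯∗f_ℓ)(N)(g₁∗⋯∗g_ℓ)(N)X^N`. Absolute
convergence holds because on the constraint `X^{Σmᵢ} = X^{Σmᵢ/2} X^{Σnᵢ/2}`, so the pair series is
dominated by a product of the convergent series `Σ |fᵢ(n)| X^{n/2}` and `Σ |gᵢ(n)| X^{n/2}`.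
-/

open scoped BigOperators Real

/-- The `ℓ`-fold Cauchy convolution `(f₁ ∗ ⋯ ∗ f_ℓ)(N) = Σ_{n₁+⋯+n_ℓ=N} ∏ᵢ fᵢ(nᵢ)`. -/
noncomputable def multiConv {ℓ : ℕ} (f : Fin ℓ → ℕ → ℂ) (N : ℕ) : ℂ :=
  ∑ t ∈ Finset.Nat.antidiagonalTuple ℓ N, ∏ i, f i (t i)

/-- `e(y) := exp(2πiy)`. -/
noncomputable def eFun (y : ℝ) : ℂ := Complex.exp (2 * π * Complex.I * y)

open Finset

theorem summable_pi_prod_of_nonneg {ι κ : Type*} [Fintype ι] {h : ι → κ → ℝ}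
    (h0 : ∀ i k, 0 ≤ h i k) (hs : ∀ i, Summable (h i)) :
    Summable fun m : ι → κ => ∏ i, h i (m i) := by
  classical
  refine summable_of_sum_le (c := ∏ i, ∑' k, h i k)
    (fun m => prod_nonneg fun i _ => h0 i (m i)) fun s => ?_
  have hs_sub : s ⊆ Fintype.piFinset fun i => s.image (· i) := fun m hm =>
    Fintype.mem_piFinset.2 fun i => mem_image_of_mem _ hm
  calc ∑ m ∈ s, ∏ i, h i (m i)
      ≤ ∑ m ∈ Fintype.piFinset fun i => s.image (· i), ∏ i, h i (m i) :=
        sum_le_sum_of_subset_of_nonneg hs_sub fun m _ _ => prod_nonneg fun i _ => h0 i (m i)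
    _ = ∏ i, ∑ k ∈ s.image (· i), h i k := (prod_univ_sum _ _).symm
    _ ≤ ∏ i, ∑' k, h i k :=
        prod_le_prod (fun i _ => sum_nonneg fun k _ => h0 i k)
          fun i _ => (hs i).sum_le_tsum _ fun k _ => h0 i k

theorem tsum_eq_tsum_sum_antidiagonalTuple {α : Type*} [AddCommMonoid α] [TopologicalSpace α]
    [ContinuousAdd α] [T3Space α] {ℓ : ℕ} {φ : (Fin ℓ → ℕ) × (Fin ℓ → ℕ) → α}
    (hφ : Summable φ) (hsupp : ∀ q, φ q ≠ 0 → ∑ i, q.1 i = ∑ i, q.2 i) :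
    ∑' q, φ q = ∑' N, ∑ m ∈ Nat.antidiagonalTuple ℓ N, ∑ n ∈ Nat.antidiagonalTuple ℓ N,
      φ (m, n) := by
  set e : (Σ N, Nat.antidiagonalTuple ℓ N × Nat.antidiagonalTuple ℓ N) →
      (Fin ℓ → ℕ) × (Fin ℓ → ℕ) := fun x => (x.2.1, x.2.2)
  have he : Function.Injective e := by
    rintro ⟨N, m, n⟩ ⟨N', m', n'⟩ h
    obtain ⟨hm, hn⟩ := Prod.ext_iff.1 h
    obtain rfl : N = N' := by
      rw [← Nat.mem_antidiagonalTuple.1 m.2, ← Nat.mem_antidiagonalTuple.1 m'.2]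
      exact congrArg _ hm
    obtain rfl : m = m' := Subtype.ext hm
    obtain rfl : n = n' := Subtype.ext hn
    rfl
  have hrange : ∀ q ∉ Set.range e, φ q = 0 := fun q hq => by
    by_contra h0
    exact hq ⟨⟨_, ⟨q.1, Nat.mem_antidiagonalTuple.2 rfl⟩,
      ⟨q.2, Nat.mem_antidiagonalTuple.2 (hsupp q h0).symm⟩⟩, rfl⟩
  rw [← he.tsum_eq (Function.support_subset_iff'.2 hrange)]
  refine (Summable.tsum_sigma' (fun N => .of_finite) ((he.summable_iff hrange).2 hφ)).trans ?_
  refine tsum_congr fun N => ?_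
  rw [tsum_fintype, Fintype.sum_prod_type]
  simp only [← sum_coe_sort (Nat.antidiagonalTuple ℓ N)]
  rfl

section PairSummand

variable {ι : Type*} [Fintype ι]

noncomputable def pairSummand (f g : ι → ℕ → ℂ) (x : ℂ) (q : (ι → ℕ) × (ι → ℕ)) : ℂ :=
  if ∑ i, q.1 i = ∑ i, q.2 i then ∏ i, f i (q.1 i) * g i (q.2 i) * x ^ q.1 i else 0

theorem norm_pairSummand_le (f g : ι → ℕ → ℂ) (x : ℂ) (q : (ι → ℕ) × (ι → ℕ)) :
    ‖pairSummand f g x q‖ ≤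
      (∏ i, ‖f i (q.1 i)‖ * √‖x‖ ^ q.1 i) * ∏ i, ‖g i (q.2 i)‖ * √‖x‖ ^ q.2 i := by
  unfold pairSummand
  split_ifs with h
  · simp only [norm_prod, norm_mul, norm_pow, prod_mul_distrib, prod_pow_eq_pow_sum]
    rw [← h, mul_mul_mul_comm, ← pow_add, ← two_mul, pow_mul, Real.sq_sqrt (norm_nonneg x)]
  · rw [norm_zero]
    positivity

theorem summable_pairSummand {f g : ι → ℕ → ℂ} {x : ℂ}
    (hf : ∀ i, Summable fun n => ‖f i n‖ * √‖x‖ ^ n)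
    (hg : ∀ i, Summable fun n => ‖g i n‖ * √‖x‖ ^ n) :
    Summable (pairSummand f g x) :=
  .of_norm_bounded
    ((summable_pi_prod_of_nonneg (fun _ _ => by positivity) hf).mul_of_nonneg
      (summable_pi_prod_of_nonneg (fun _ _ => by positivity) hg)
      (fun _ => by positivity) fun _ => by positivity)
    (norm_pairSummand_le f g x)

end PairSummand

theorem sum_antidiagonalTuple_pairSummand {ℓ : ℕ} (f g : Fin ℓ → ℕ → ℂ) (x : ℂ) (N : ℕ) :
    ∑ m ∈ Nat.antidiagonalTuple ℓ N, ∑ n ∈ Nat.antidiagonalTuple ℓ N, pairSummand f g x (m, n) =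
      multiConv f N * multiConv g N * x ^ N := by
  rw [multiConv, multiConv, sum_mul_sum, sum_mul]
  refine sum_congr rfl fun m hm => ?_
  rw [sum_mul]
  refine sum_congr rfl fun n hn => ?_
  rw [Nat.mem_antidiagonalTuple] at hm hn
  rw [pairSummand, if_pos (hm.trans hn.symm), prod_mul_distrib, prod_mul_distrib,
    prod_pow_eq_pow_sum, hm]

theorem tsum_pairSummand {ℓ : ℕ} {f g : Fin ℓ → ℕ → ℂ} {x : ℂ}
    (hf : ∀ i, Summable fun n => ‖f i n‖ * √‖x‖ ^ n)
    (hg : ∀ i, Summable fun n => ‖g i n‖ * √‖x‖ ^ n) :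
    ∑' q, pairSummand f g x q = ∑' N, multiConv f N * multiConv g N * x ^ N := by
  refine (tsum_eq_tsum_sum_antidiagonalTuple (summable_pairSummand hf hg) fun q hq => ?_).trans
    (tsum_congr (sum_antidiagonalTuple_pairSummand f g x))
  by_contra h
  exact hq (if_neg h)

section SplitByMin

variable {ι : Type*}

def splitByMin (q : (ι → ℕ) × (ι → ℕ)) : (ι → ℕ) × (ι → ℕ) × (ι → ℕ) :=
  (fun i => q.1 i - min (q.1 i) (q.2 i), fun i => q.2 i - min (q.1 i) (q.2 i),
    fun i => min (q.1 i) (q.2 i))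

theorem splitByMin_fst_add (q : (ι → ℕ) × (ι → ℕ)) (i : ι) :
    (splitByMin q).2.2 i + (splitByMin q).1 i = q.1 i := by
  simp only [splitByMin]
  omega

theorem splitByMin_snd_add (q : (ι → ℕ) × (ι → ℕ)) (i : ι) :
    (splitByMin q).2.2 i + (splitByMin q).2.1 i = q.2 i := by
  simp only [splitByMin]
  omega

theorem min_splitByMin_eq_zero (q : (ι → ℕ) × (ι → ℕ)) (i : ι) :
    min ((splitByMin q).1 i) ((splitByMin q).2.1 i) = 0 := by
  simp only [splitByMin]
  omega

theorem sum_splitByMin_eq_iff [Fintype ι] (q : (ι → ℕ) × (ι → ℕ)) :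
    ∑ i, (splitByMin q).1 i = ∑ i, (splitByMin q).2.1 i ↔ ∑ i, q.1 i = ∑ i, q.2 i := by
  simp only [← splitByMin_fst_add q, ← splitByMin_snd_add q, sum_add_distrib, add_right_inj]

theorem splitByMin_injective : Function.Injective (splitByMin (ι := ι)) :=
  Function.LeftInverse.injective (g := fun p => (p.2.2 + p.1, p.2.2 + p.2.1)) fun q =>
    Prod.ext (funext (splitByMin_fst_add q)) (funext (splitByMin_snd_add q))

theorem mem_range_splitByMin {p : (ι → ℕ) × (ι → ℕ) × (ι → ℕ)}
    (hp : ∀ i, min (p.1 i) (p.2.1 i) = 0) : p ∈ Set.range splitByMin := by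
  refine ⟨(p.2.2 + p.1, p.2.2 + p.2.1), Prod.ext ?_ (Prod.ext ?_ ?_)⟩ <;>
    funext i <;> have := hp i <;> simp only [splitByMin, Pi.add_apply] <;> omega

end SplitByMin

theorem stmt7_general (ℓ : ℕ) (f g : Fin ℓ → ℕ → ℂ)
    (X : ℝ) (hX0 : 0 < X)
    (hf : ∀ i, Summable (fun n : ℕ => ‖f i n‖ * X ^ ((n : ℝ) / 2)))
    (hg : ∀ i, Summable (fun n : ℕ => ‖g i n‖ * X ^ ((n : ℝ) / 2))) :
    Summable (fun p : (Fin ℓ → ℕ) × (Fin ℓ → ℕ) × (Fin ℓ → ℕ) =>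
      if (∑ i, p.1 i = ∑ i, p.2.1 i) ∧ (∀ i, min (p.1 i) (p.2.1 i) = 0) then
        ∏ i, f i (p.2.2 i + p.1 i) * g i (p.2.2 i + p.2.1 i) * (X : ℂ) ^ (p.2.2 i + p.1 i)
      else 0) ∧
    (∑' p : (Fin ℓ → ℕ) × (Fin ℓ → ℕ) × (Fin ℓ → ℕ),
      if (∑ i, p.1 i = ∑ i, p.2.1 i) ∧ (∀ i, min (p.1 i) (p.2.1 i) = 0) then
        ∏ i, f i (p.2.2 i + p.1 i) * g i (p.2.2 i + p.2.1 i) * (X : ℂ) ^ (p.2.2 i + p.1 i)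
      else 0)
    = ∑' N : ℕ, multiConv f N * multiConv g N * (X : ℂ) ^ N := by
  set F : (Fin ℓ → ℕ) × (Fin ℓ → ℕ) × (Fin ℓ → ℕ) → ℂ := fun p =>
    if (∑ i, p.1 i = ∑ i, p.2.1 i) ∧ (∀ i, min (p.1 i) (p.2.1 i) = 0) then
      ∏ i, f i (p.2.2 i + p.1 i) * g i (p.2.2 i + p.2.1 i) * (X : ℂ) ^ (p.2.2 i + p.1 i)
    else 0
  have hF : F ∘ splitByMin = pairSummand f g X := by
    funext q
    simp only [F, pairSummand, Function.comp_apply, splitByMin_fst_add, splitByMin_snd_add,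
      min_splitByMin_eq_zero, sum_splitByMin_eq_iff, implies_true, and_true]
  have hF0 : ∀ p ∉ Set.range splitByMin, F p = 0 := fun p hp =>
    if_neg fun h => hp (mem_range_splitByMin h.2)
  have hsqrt : ∀ n : ℕ, X ^ ((n : ℝ) / 2) = √‖(X : ℂ)‖ ^ n := fun n => by
    rw [Complex.norm_real, Real.norm_of_nonneg hX0.le, Real.sqrt_eq_rpow, ← Real.rpow_natCast,
      ← Real.rpow_mul hX0.le, one_div_mul_eq_div]
  simp only [hsqrt] at hf hg
  refine ⟨(splitByMin_injective.summable_iff hF0).1 (hF ▸ summable_pairSummand hf hg), ?_⟩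
  rw [← splitByMin_injective.tsum_eq (Function.support_subset_iff'.2 hF0)]
  exact (congrArg tsum hF).trans (tsum_pairSummand hf hg)

/-- The general form of Lemma 2: for sequences `fᵢ, gᵢ` with `Σ |fᵢ(n)| X^{n/2} < ∞` and
`Σ |gᵢ(n)| X^{n/2} < ∞`, the sum over tuples `(Mᵢ,Nᵢ,Kᵢ)` with `Σ Mᵢ = Σ Nᵢ` and
`min(Mᵢ,Nᵢ) = 0` of `∏ᵢ fᵢ(Kᵢ+Mᵢ) gᵢ(Kᵢ+Nᵢ) X^{Kᵢ+Mᵢ}` converges absolutely and equals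
`Σ_N (f₁∗⋯∗f_ℓ)(N)(g₁∗⋯∗g_ℓ)(N) X^N`. -/
theorem stmt7 (ℓ : ℕ) (hℓ : 1 ≤ ℓ) (f g : Fin ℓ → ℕ → ℂ)
    (X : ℝ) (hX0 : 0 < X) (hX1 : X < 1)
    (hf : ∀ i, Summable (fun n : ℕ => ‖f i n‖ * X ^ ((n : ℝ) / 2)))
    (hg : ∀ i, Summable (fun n : ℕ => ‖g i n‖ * X ^ ((n : ℝ) / 2))) :
    Summable (fun p : (Fin ℓ → ℕ) × (Fin ℓ → ℕ) × (Fin ℓ → ℕ) =>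
      if (∑ i, p.1 i = ∑ i, p.2.1 i) ∧ (∀ i, min (p.1 i) (p.2.1 i) = 0) then
        ∏ i, f i (p.2.2 i + p.1 i) * g i (p.2.2 i + p.2.1 i) * (X : ℂ) ^ (p.2.2 i + p.1 i)
      else 0) ∧
    (∑' p : (Fin ℓ → ℕ) × (Fin ℓ → ℕ) × (Fin ℓ → ℕ),
      if (∑ i, p.1 i = ∑ i, p.2.1 i) ∧ (∀ i, min (p.1 i) (p.2.1 i) = 0) then
        ∏ i, f i (p.2.2 i + p.1 i) * g i (p.2.2 i + p.2.1 i) * (X : ℂ) ^ (p.2.2 i + p.1 i)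
      else 0)
    = ∑' N : ℕ, multiConv f N * multiConv g N * (X : ℂ) ^ N :=
  stmt7_general ℓ f g X hX0 hf hg
end

section
/- Let ℓ ≥ 1, let A and B be finite lists of complex numbers and let α_1,…,α_ℓ, β_1,…,β_ℓ be complex numbers, all of whose real parts lie in (−1/4, 1/4), and let X be real with 0 < X < 1. Then ∏_{j=1}^ℓ (1 − X^{1−α_j−β_j}) · C(A ∪ {−β_1,…,−β_ℓ}, B ∪ {−α_1,…,−α_ℓ}) = (−1)^ℓ Σ over all pairs of disjoint subsets J_1, J_2 ⊆ {1,…,ℓ} of (−1)^{|J_1|+|J_2|} · C(A ∪ {−β_j : j ∈ J_1}, B ∪ {−α_j : j ∈ J_2}). -/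
open scoped BigOperators

/-- The complex power `X ^ w := exp(w · log X)` of a real number `X`. -/
noncomputable def cpowX (X : ℝ) (w : ℂ) : ℂ := Complex.exp (w * (Real.log X : ℂ))

/-- The local divisor coefficient `A(n) = Σ_{n₁+⋯+n_k = n} X^{a₁n₁+⋯+a_k n_k}` attached to a
finite list `A` of complex shifts; it is `0` for negative `n`. -/
noncomputable def locCoeff (X : ℝ) (A : List ℂ) (n : ℤ) : ℂ :=
  if 0 ≤ n then
    ∑ t ∈ Finset.Nat.antidiagonalTuple A.length n.toNat,
      cpowX X (∑ i : Fin A.length, A.get i * (t i : ℂ))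
  else 0

/-- `C(A,B) = Σ_{M ≥ 0} A(M) B(M) X^M`. -/
noncomputable def Ccal (X : ℝ) (A B : List ℂ) : ℂ :=
  ∑' M : ℕ, locCoeff X A (M : ℤ) * locCoeff X B (M : ℤ) * (X : ℂ) ^ (M : ℕ)

/-- The general term of the series `Σ_{A,B,α,β}(M,N)`, indexed by `(q,d,j,k)` with
`q ∈ {0,1}` and `d,j,k ≥ 0`. -/
noncomputable def sigmaTerm (X : ℝ) (A B : List ℂ) (α β : ℂ) (M N : ℕ)
    (x : Fin 2 × ℕ × ℕ × ℕ) : ℂ :=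
  match x with
  | (q, d, j, k) =>
    let qz : ℤ := (q : ℕ)
    let dz : ℤ := d
    let jz : ℤ := j
    let kz : ℤ := k
    (-1 : ℂ) ^ (q : ℕ) * cpowX X ((d : ℂ) * (α + β)) *
      locCoeff X (A.map (· + (-α))) (jz + qz + dz - min (qz + dz) (N : ℤ)) *
      locCoeff X (B.map (· + (-β))) (kz + qz + dz - min (qz + dz) (M : ℤ)) *
      (X : ℂ) ^ (2 * qz + dz + jz + kz - min (qz + dz) (M : ℤ) - min (qz + dz) (N : ℤ))

/-- `Σ_{A,B,α,β}(M,N)`. -/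
noncomputable def sigmaSum (X : ℝ) (A B : List ℂ) (α β : ℂ) (M N : ℕ) : ℂ :=
  ∑' x : Fin 2 × ℕ × ℕ × ℕ, sigmaTerm X A B α β M N x

/-! The one-step identity is a telescoping sum. Write `P = (γ :: A)(·)`, `a = A(·)`,
`Q = (δ :: B)(·)`, `b = B(·)`. Since `P (M + 1) = a (M + 1) + X^γ P M` (and likewise for `Q`),
the series `Σ_M (P M - a M) (Q M - b M) X^M` equals both `X^{1+γ+δ} C(γ :: A, δ :: B)` (shift `M` by
one) and `C(γ :: A, δ :: B) - C(γ :: A, B) - C(A, δ :: B) + C(A, B)` (expand the product), whence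
`(1 - X^{1+γ+δ}) C(γ :: A, δ :: B) = C(γ :: A, B) + C(A, δ :: B) - C(A, B)`.
Applying this with `γ = -β_j`, `δ = -α_j` for `j = 1, …, ℓ` expands the product into the signed sum
over disjoint pairs `(J₁, J₂)`; that `C` only depends on its lists up to permutation lets the `j`
be peeled off in any order. Real parts above `-1/4` give `|A(M) B(M)| X^M ≤ poly(M) X^{M/2}`, so all
the series converge absolutely. -/

open Finset

theorem Finset.Nat.sum_antidiagonalTuple_succ {M : Type*} [AddCommMonoid M] (k n : ℕ)
    (f : (Fin (k + 1) → ℕ) → M) :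
    ∑ t ∈ Nat.antidiagonalTuple (k + 1) n, f t =
      ∑ p ∈ antidiagonal n, ∑ t ∈ Nat.antidiagonalTuple k p.2, f (Fin.cons p.1 t) := by
  simp only [Finset.sum, Nat.antidiagonalTuple, Multiset.Nat.antidiagonalTuple,
    List.Nat.antidiagonalTuple, HasAntidiagonal.antidiagonal, Multiset.Nat.antidiagonal,
    Multiset.map_coe, Multiset.sum_coe, List.flatMap, List.map_flatten, List.sum_flatten,
    List.map_map, Function.comp_def]

lemma Finset.perm_map_toList_univ_ofFn {α : Type*} {n : ℕ} (h : Fin n → α) :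
    (Finset.univ.toList.map h).Perm (List.ofFn h) :=
  Multiset.coe_eq_coe.1 (by rw [← Multiset.map_coe, Finset.coe_toList, Fin.univ_val_map])

section InclusionExclusion

variable {ι κ R : Type*} [DecidableEq ι] [CommRing R]

variable (F : List κ → List κ → R) (f g : ι → κ) in
noncomputable def disjointExpansion (s : Finset ι) (A B : List κ) : R :=
  ∑ J₁ ∈ s.powerset, ∑ J₂ ∈ s.powerset,
    if Disjoint J₁ J₂ then
      (-1) ^ (s.card + J₁.card + J₂.card) * F (A ++ J₁.toList.map f) (B ++ J₂.toList.map g)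
    else 0

variable {F : List κ → List κ → R} {f g : ι → κ}

lemma disjointExpansion_empty (A B : List κ) : disjointExpansion F f g ∅ A B = F A B := by
  simp [disjointExpansion]

lemma perm_append_map_toList_insert (h : ι → κ) (C : List κ) {a : ι} {J : Finset ι}
    (ha : a ∉ J) :
    (C ++ (insert a J).toList.map h).Perm (h a :: C ++ J.toList.map h) :=
  (((Finset.toList_insert ha).map h).append_left C).trans List.perm_middle

lemma disjointExpansion_insert (hF : ∀ {A A' B B'}, A.Perm A' → B.Perm B' → F A B = F A' B')
    {a : ι} {s : Finset ι} (ha : a ∉ s) (A B : List κ) :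
    disjointExpansion F f g (insert a s) A B =
      disjointExpansion F f g s (f a :: A) B + disjointExpansion F f g s A (g a :: B) -
        disjointExpansion F f g s A B := by
  simp only [disjointExpansion, sum_powerset_insert ha, ← sum_add_distrib, ← sum_sub_distrib]
  refine sum_congr rfl fun J₁ hJ₁ => sum_congr rfl fun J₂ hJ₂ => ?_
  have ha₁ : a ∉ J₁ := fun h => ha (mem_powerset.1 hJ₁ h)
  have ha₂ : a ∉ J₂ := fun h => ha (mem_powerset.1 hJ₂ h)
  rw [hF (perm_append_map_toList_insert f A ha₁) (.refl _),
    hF (.refl _) (perm_append_map_toList_insert g B ha₂)]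
  simp only [disjoint_insert_left, disjoint_insert_right, mem_insert_self, card_insert_of_notMem,
    ha, ha₁, ha₂, not_true_eq_false, not_false_eq_true, true_and, false_and, if_false, add_zero]
  split_ifs <;> ring

theorem prod_one_sub_mul_eq_disjointExpansion (P : κ → Prop)
    (hF : ∀ {A A' B B'}, A.Perm A' → B.Perm B' → F A B = F A' B')
    (hf : ∀ j, P (f j)) (hg : ∀ j, P (g j)) {Y : ι → R}
    (hY : ∀ j A B, (∀ x ∈ A, P x) → (∀ x ∈ B, P x) →
      (1 - Y j) * F (f j :: A) (g j :: B) = F (f j :: A) B + F A (g j :: B) - F A B)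
    (s : Finset ι) {A B : List κ} (hA : ∀ x ∈ A, P x) (hB : ∀ x ∈ B, P x) :
    (∏ j ∈ s, (1 - Y j)) * F (A ++ s.toList.map f) (B ++ s.toList.map g) =
      disjointExpansion F f g s A B := by
  induction s using Finset.induction_on generalizing A B with
  | empty => simp [disjointExpansion_empty]
  | insert a s ha ih =>
    have hfA : ∀ x ∈ f a :: A, P x := List.forall_mem_cons.2 ⟨hf a, hA⟩
    have hgB : ∀ x ∈ g a :: B, P x := List.forall_mem_cons.2 ⟨hg a, hB⟩
    have hAs : ∀ x ∈ A ++ s.toList.map f, P x :=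
      List.forall_mem_append.2 ⟨hA, List.forall_mem_map.2 fun j _ => hf j⟩
    have hBs : ∀ x ∈ B ++ s.toList.map g, P x :=
      List.forall_mem_append.2 ⟨hB, List.forall_mem_map.2 fun j _ => hg j⟩
    rw [disjointExpansion_insert hF ha, ← ih hfA hB, ← ih hA hgB, ← ih hA hB, prod_insert ha,
      hF (perm_append_map_toList_insert f A ha) (perm_append_map_toList_insert g B ha),
      mul_comm (1 - Y a), mul_assoc, List.cons_append, List.cons_append, hY a _ _ hAs hBs]
    ring

end InclusionExclusion

lemma cpowX_add (X : ℝ) (a b : ℂ) : cpowX X (a + b) = cpowX X a * cpowX X b := by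
  simp [cpowX, add_mul, Complex.exp_add]

lemma cpowX_mul_natCast (X : ℝ) (a : ℂ) (m : ℕ) : cpowX X (a * m) = cpowX X a ^ m := by
  rw [cpowX, cpowX, ← Complex.exp_nat_mul]
  ring_nf

@[simp] lemma cpowX_zero (X : ℝ) : cpowX X 0 = 1 := by simp [cpowX]

lemma cpowX_one {X : ℝ} (hX : 0 < X) : cpowX X 1 = X := by
  rw [cpowX, one_mul, ← Complex.ofReal_exp, Real.exp_log hX]

lemma norm_cpowX {X : ℝ} (hX : 0 < X) (w : ℂ) : ‖cpowX X w‖ = X ^ w.re := by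
  rw [cpowX, Complex.norm_exp, Real.rpow_def_of_pos hX, mul_comm]
  simp

section locCoeff

variable (X : ℝ)

lemma locCoeff_zero (A : List ℂ) : locCoeff X A 0 = 1 := by
  simp [locCoeff, Finset.Nat.antidiagonalTuple_zero_right]

@[simp] lemma locCoeff_nil_succ (n : ℕ) : locCoeff X [] (n + 1 : ℤ) = 0 := by
  rw [← Nat.cast_succ]
  simp [locCoeff, Finset.Nat.antidiagonalTuple_zero_succ]

lemma locCoeff_cons (γ : ℂ) (A : List ℂ) (n : ℕ) :
    locCoeff X (γ :: A) n = ∑ p ∈ antidiagonal n, cpowX X γ ^ p.1 * locCoeff X A p.2 := by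
  simp only [locCoeff, Nat.cast_nonneg, if_true, Int.toNat_natCast, List.length_cons,
    Finset.Nat.sum_antidiagonalTuple_succ, Finset.mul_sum, ← cpowX_mul_natCast, ← cpowX_add,
    Fin.sum_univ_succ, Fin.cons_zero, Fin.cons_succ, List.get_eq_getElem, Fin.val_zero,
    Fin.val_succ, List.getElem_cons_zero, List.getElem_cons_succ]

lemma locCoeff_eq_coeff_prod (A : List ℂ) (n : ℕ) :
    locCoeff X A n =
      PowerSeries.coeff n (A.map fun γ => PowerSeries.mk (cpowX X γ ^ ·)).prod := by
  induction A generalizing n with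
  | nil => rcases n with _ | n <;> simp [locCoeff_zero, PowerSeries.coeff_one]
  | cons γ A ih => simp [locCoeff_cons, PowerSeries.coeff_mul, ih]

lemma locCoeff_perm {A A' : List ℂ} (h : A.Perm A') (n : ℕ) :
    locCoeff X A n = locCoeff X A' n := by
  rw [locCoeff_eq_coeff_prod, locCoeff_eq_coeff_prod, (h.map _).prod_eq]

lemma locCoeff_cons_succ (γ : ℂ) (A : List ℂ) (n : ℕ) :
    locCoeff X (γ :: A) (n + 1 : ℕ) =
      locCoeff X A (n + 1 : ℕ) + cpowX X γ * locCoeff X (γ :: A) n := by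
  rw [locCoeff_cons, locCoeff_cons, Finset.Nat.antidiagonal_succ, sum_cons, sum_map, mul_sum]
  simp [pow_succ', mul_assoc]

end locCoeff

section Ccal

variable {X : ℝ}

lemma norm_locCoeff_le (hX0 : 0 < X) (hX1 : X ≤ 1) {σ : ℝ} {A : List ℂ}
    (hA : ∀ a ∈ A, σ ≤ a.re) (n : ℕ) :
    ‖locCoeff X A n‖ ≤ (n + 1) ^ A.length * (X ^ σ) ^ n := by
  induction A generalizing n with
  | nil => rcases n with _ | n <;> simp [locCoeff_zero]; positivity
  | cons γ A ih =>
    have hγ : ‖cpowX X γ‖ ≤ X ^ σ := by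
      rw [norm_cpowX hX0]
      exact Real.rpow_le_rpow_of_exponent_ge hX0 hX1 (hA γ List.mem_cons_self)
    have hA' : ∀ a ∈ A, σ ≤ a.re := fun a ha => hA a (List.mem_cons_of_mem γ ha)
    calc ‖locCoeff X (γ :: A) n‖
        ≤ ∑ p ∈ antidiagonal n, (X ^ σ) ^ p.1 * ((p.2 + 1) ^ A.length * (X ^ σ) ^ p.2) := by
          rw [locCoeff_cons]
          refine (norm_sum_le _ _).trans (sum_le_sum fun p _ => ?_)
          rw [norm_mul, norm_pow]
          gcongr
          exact ih hA' p.2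
      _ ≤ ∑ p ∈ antidiagonal n, (n + 1) ^ A.length * (X ^ σ) ^ n := by
          refine sum_le_sum fun p hp => ?_
          rw [HasAntidiagonal.mem_antidiagonal] at hp
          rw [mul_left_comm, ← pow_add, hp]
          gcongr
          exact_mod_cast (by omega : p.2 ≤ n)
      _ = (n + 1) ^ (γ :: A).length * (X ^ σ) ^ n := by
          simp [Finset.Nat.card_antidiagonal, pow_succ']
          ring

lemma hasSum_Ccal (hX0 : 0 < X) (hX1 : X < 1) {σ : ℝ} (hσ : -1 / 2 < σ)
    {A B : List ℂ} (hA : ∀ a ∈ A, σ ≤ a.re) (hB : ∀ b ∈ B, σ ≤ b.re) :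
    HasSum (fun M : ℕ => locCoeff X A M * locCoeff X B M * (X : ℂ) ^ M) (Ccal X A B) := by
  set k := A.length + B.length
  set r := X ^ σ * X ^ σ * X
  have hr : r = X ^ (2 * σ + 1) := by
    rw [Real.rpow_add hX0, Real.rpow_one, two_mul, Real.rpow_add hX0]
  have hr0 : 0 < r := by positivity
  have hr1 : r < 1 := hr ▸ Real.rpow_lt_one hX0.le hX1 (by linarith)
  have hgeom : Summable fun n : ℕ => ((n : ℝ) + 1) ^ k * r ^ n := by
    have h := (summable_nat_add_iff (f := fun n : ℕ => (n : ℝ) ^ k * r ^ n) 1).2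
      (summable_pow_mul_geometric_of_norm_lt_one k (by rwa [Real.norm_of_nonneg hr0.le]))
    refine (h.mul_left r⁻¹).congr fun n => ?_
    rw [pow_succ, Nat.cast_add_one, mul_left_comm, ← mul_assoc r⁻¹, mul_comm r⁻¹,
      inv_mul_cancel_right₀ hr0.ne']
  refine (Summable.of_norm_bounded hgeom fun n => ?_).hasSum
  calc ‖locCoeff X A n * locCoeff X B n * (X : ℂ) ^ n‖
      ≤ ((n + 1) ^ A.length * (X ^ σ) ^ n) * ((n + 1) ^ B.length * (X ^ σ) ^ n) * X ^ n := by
        rw [norm_mul, norm_mul, norm_pow, Complex.norm_real, Real.norm_of_nonneg hX0.le]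
        gcongr
        · exact norm_locCoeff_le hX0 hX1.le hA n
        · exact norm_locCoeff_le hX0 hX1.le hB n
    _ = ((n : ℝ) + 1) ^ k * r ^ n := by ring

lemma Ccal_perm {A A' B B' : List ℂ} (hA : A.Perm A') (hB : B.Perm B') :
    Ccal X A B = Ccal X A' B' :=
  tsum_congr fun M => by rw [locCoeff_perm X hA, locCoeff_perm X hB]

theorem one_sub_mul_Ccal_cons_cons (hX0 : 0 < X) (hX1 : X < 1) {σ : ℝ} (hσ : -1 / 2 < σ)
    {A B : List ℂ} (hA : ∀ a ∈ A, σ ≤ a.re) (hB : ∀ b ∈ B, σ ≤ b.re) {γ δ : ℂ}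
    (hγ : σ ≤ γ.re) (hδ : σ ≤ δ.re) :
    (1 - cpowX X (1 + γ + δ)) * Ccal X (γ :: A) (δ :: B) =
      Ccal X (γ :: A) B + Ccal X A (δ :: B) - Ccal X A B := by
  have hγA : ∀ a ∈ γ :: A, σ ≤ a.re := List.forall_mem_cons.2 ⟨hγ, hA⟩
  have hδB : ∀ b ∈ δ :: B, σ ≤ b.re := List.forall_mem_cons.2 ⟨hδ, hB⟩
  set Y := cpowX X (1 + γ + δ)
  set g : ℕ → ℂ := fun M => (locCoeff X (γ :: A) M - locCoeff X A M) *
    (locCoeff X (δ :: B) M - locCoeff X B M) * (X : ℂ) ^ M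
  have hg : HasSum g
      (Ccal X (γ :: A) (δ :: B) - Ccal X (γ :: A) B - Ccal X A (δ :: B) + Ccal X A B) := by
    refine ((((hasSum_Ccal hX0 hX1 hσ hγA hδB).sub (hasSum_Ccal hX0 hX1 hσ hγA hB)).sub
      (hasSum_Ccal hX0 hX1 hσ hA hδB)).add (hasSum_Ccal hX0 hX1 hσ hA hB)).congr_fun fun M => ?_
    simp only [g]
    ring
  have hg_zero : g 0 = 0 := by simp [g, locCoeff_zero]
  have hg_succ (M : ℕ) :
      g (M + 1) = Y * (locCoeff X (γ :: A) M * locCoeff X (δ :: B) M * (X : ℂ) ^ M) := by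
    simp only [g, Y, locCoeff_cons_succ, cpowX_add, cpowX_one hX0]
    ring
  have hshift := (hasSum_nat_add_iff' 1).2 hg
  simp only [hg_succ, Finset.sum_range_one, hg_zero, sub_zero] at hshift
  linear_combination hshift.unique ((hasSum_Ccal hX0 hX1 hσ hγA hδB).mul_left Y)

end Ccal

theorem stmt10_general (ℓ : ℕ) (A B : List ℂ) (α β : Fin ℓ → ℂ)
    (hA : ∀ a ∈ A, -(1/4 : ℝ) < a.re ∧ a.re < 1/4)
    (hB : ∀ b ∈ B, -(1/4 : ℝ) < b.re ∧ b.re < 1/4)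
    (hα : ∀ j, -(1/4 : ℝ) < (α j).re ∧ (α j).re < 1/4)
    (hβ : ∀ j, -(1/4 : ℝ) < (β j).re ∧ (β j).re < 1/4)
    (X : ℝ) (hX0 : 0 < X) (hX1 : X < 1) :
    (∏ j, (1 - cpowX X (1 - α j - β j))) *
      Ccal X (A ++ List.ofFn (fun j => -β j)) (B ++ List.ofFn (fun j => -α j))
    = (-1 : ℂ) ^ ℓ * ∑ J₁ : Finset (Fin ℓ), ∑ J₂ : Finset (Fin ℓ),
        if Disjoint J₁ J₂ then
          (-1 : ℂ) ^ (J₁.card + J₂.card) *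
            Ccal X (A ++ J₁.toList.map (fun j => -β j)) (B ++ J₂.toList.map (fun j => -α j))
        else 0 := by
  have hσ : -1 / 2 < -(1 / 4 : ℝ) := by norm_num
  have hα' (j : Fin ℓ) : -(1 / 4 : ℝ) ≤ (-α j).re := by simpa using (hα j).2.le
  have hβ' (j : Fin ℓ) : -(1 / 4 : ℝ) ≤ (-β j).re := by simpa using (hβ j).2.le
  have key := prod_one_sub_mul_eq_disjointExpansion (F := Ccal X) (f := fun j => -β j)
    (g := fun j => -α j) (fun z : ℂ => -(1 / 4 : ℝ) ≤ z.re) Ccal_perm hβ' hα'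
    (Y := fun j => cpowX X (1 - α j - β j))
    (fun j A B hA hB => by
      rw [show 1 - α j - β j = 1 + -β j + -α j by ring]
      exact one_sub_mul_Ccal_cons_cons hX0 hX1 hσ hA hB (hβ' j) (hα' j))
    univ (fun a ha => (hA a ha).1.le) (fun b hb => (hB b hb).1.le)
  rw [Ccal_perm ((perm_map_toList_univ_ofFn _).append_left A)
    ((perm_map_toList_univ_ofFn _).append_left B)] at key
  simp only [key, disjointExpansion, powerset_univ, card_univ, Fintype.card_fin, add_assoc,
    pow_add (-1 : ℂ) ℓ, mul_assoc, mul_sum, mul_ite, mul_zero]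

/-- Lemma 3 of the paper: the inclusion–exclusion expansion
`∏_j (1-X^{1-α_j-β_j}) C(A∪{-β₁,…,-β_ℓ}, B∪{-α₁,…,-α_ℓ})
 = (-1)^ℓ Σ_{J₁,J₂⊆{1,…,ℓ}, J₁∩J₂=∅} (-1)^{|J₁|+|J₂|} C(A∪-β_{J₁}, B∪-α_{J₂})`. -/
theorem stmt10 (ℓ : ℕ) (hℓ : 1 ≤ ℓ) (A B : List ℂ) (α β : Fin ℓ → ℂ)
    (hA : ∀ a ∈ A, -(1/4 : ℝ) < a.re ∧ a.re < 1/4)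
    (hB : ∀ b ∈ B, -(1/4 : ℝ) < b.re ∧ b.re < 1/4)
    (hα : ∀ j, -(1/4 : ℝ) < (α j).re ∧ (α j).re < 1/4)
    (hβ : ∀ j, -(1/4 : ℝ) < (β j).re ∧ (β j).re < 1/4)
    (X : ℝ) (hX0 : 0 < X) (hX1 : X < 1) :
    (∏ j, (1 - cpowX X (1 - α j - β j))) *
      Ccal X (A ++ List.ofFn (fun j => -β j)) (B ++ List.ofFn (fun j => -α j))
    = (-1 : ℂ) ^ ℓ * ∑ J₁ : Finset (Fin ℓ), ∑ J₂ : Finset (Fin ℓ),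
        if Disjoint J₁ J₂ then
          (-1 : ℂ) ^ (J₁.card + J₂.card) *
            Ccal X (A ++ J₁.toList.map (fun j => -β j)) (B ++ J₂.toList.map (fun j => -α j))
        else 0 :=
  stmt10_general ℓ A B α β hA hB hα hβ X hX0 hX1
end
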